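/- arXiv:2201.00665 — 5 statements merged into one kernel-verified Lean document; each statement's English description precedes it below -/
import Mathlib

section
/- There exists an absolute constant C > 0 such that for every finite simple graph G on n vertices and every pair of acyclic orientations α, α″ of G that are double-flip equivalent, α″ can be reached from α by a sequence of at most C·n⁴ double-flips. -/
open SimpleGraph

/-- An acyclic orientation of a simple graph `G`: a choice of direction `toRel` for every edge
of `G` with no directed cycles. -/
structure AcyclicOrientation {V : Type*} (G : SimpleGraph V) where
  toRel : V → V → Prop
  adj_of_rel : ∀ a b, toRel a b → G.Adj a b
  rel_total : ∀ a b, G.Adj a b → toRel a b ∨ toRel b a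
  asymm : ∀ a b, toRel a b → ¬ toRel b a
  acyclic : ∀ v, ¬ Relation.TransGen toRel v v

/-- `v` is a source: it has no incoming edges (isolated vertices are permitted). -/
def AcyclicOrientation.IsSource {V : Type*} {G : SimpleGraph V}
    (α : AcyclicOrientation G) (v : V) : Prop :=
  ∀ u, ¬ α.toRel u v

/-- `v` is a sink: it has no outgoing edges (isolated vertices are permitted). -/
def AcyclicOrientation.IsSink {V : Type*} {G : SimpleGraph V}
    (α : AcyclicOrientation G) (v : V) : Prop :=
  ∀ u, ¬ α.toRel v u

/-- `α'` is obtained from `α` by a double-flip: a source `v` and a sink `w` that are nonadjacent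
in `G` are simultaneously converted into, respectively, a sink and a source, by reversing the
directions of all edges incident to `v` and all edges incident to `w`. -/
def IsDoubleFlip {V : Type*} {G : SimpleGraph V} (α α' : AcyclicOrientation G) : Prop :=
  ∃ v w : V, v ≠ w ∧ ¬ G.Adj v w ∧ α.IsSource v ∧ α.IsSink w ∧
    ∀ a b, (α'.toRel a b ↔
      ((a ≠ v ∧ a ≠ w ∧ b ≠ v ∧ b ≠ w) ∧ α.toRel a b) ∨
      ((a = v ∨ a = w ∨ b = v ∨ b = w) ∧ α.toRel b a))

/-- Double-flip equivalence: `α ≈ α''` iff one can be obtained from the other by a sequence of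
double-flips. -/
def DoubleFlipEquiv {V : Type*} {G : SimpleGraph V} (α α'' : AcyclicOrientation G) : Prop :=
  Relation.ReflTransGen IsDoubleFlip α α''

/-- `b` can be reached from `a` by a sequence of at most `k` steps of the relation `r`. -/
def ReachableIn {X : Type*} (r : X → X → Prop) (k : ℕ) (a b : X) : Prop :=
  ∃ m ≤ k, ∃ f : ℕ → X, f 0 = a ∧ f m = b ∧ ∀ i < m, r (f i) (f (i + 1))

set_option linter.unusedSectionVars false

namespace DFP

theorem AO.ext {V : Type*} {G : SimpleGraph V} {α β : AcyclicOrientation G}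
    (h : α.toRel = β.toRel) : α = β := by
  cases α; cases β; cases h; rfl

variable {V : Type} [Fintype V] {G : SimpleGraph V} (α0 : AcyclicOrientation G)

/-- Height functions compatible with the base orientation `α0`. -/
def Compat (c : V → ℤ) : Prop := ∀ a b, α0.toRel a b → c a = c b ∨ c a = c b + 1

/-- The orientation relation determined by a height function. -/
def R (c : V → ℤ) (x y : V) : Prop :=
  (α0.toRel x y ∧ c x = c y) ∨ (α0.toRel y x ∧ c y = c x + 1)

variable {α0}

lemma R_adj {c : V → ℤ} {x y : V} (h : R α0 c x y) : G.Adj x y := by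
  rcases h with ⟨h, _⟩ | ⟨h, _⟩
  · exact α0.adj_of_rel _ _ h
  · exact (α0.adj_of_rel _ _ h).symm

lemma R_total {c : V → ℤ} (hc : Compat α0 c) {x y : V} (h : G.Adj x y) :
    R α0 c x y ∨ R α0 c y x := by
  rcases α0.rel_total x y h with h' | h'
  · rcases hc _ _ h' with he | he
    · exact Or.inl (Or.inl ⟨h', he⟩)
    · exact Or.inr (Or.inr ⟨h', he⟩)
  · rcases hc _ _ h' with he | he
    · exact Or.inr (Or.inl ⟨h', he⟩)
    · exact Or.inl (Or.inr ⟨h', he⟩)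

lemma R_mono {c : V → ℤ} {x y : V} (h : R α0 c x y) : c x ≤ c y := by
  rcases h with ⟨_, h⟩ | ⟨_, h⟩ <;> omega

lemma R_transGen_mono {c : V → ℤ} {x y : V} (h : Relation.TransGen (R α0 c) x y) :
    c x ≤ c y := by
  induction h with
  | single h => exact R_mono h
  | tail _ h ih => exact le_trans ih (R_mono h)

lemma R_transGen_level {c : V → ℤ} {x y : V} (h : Relation.TransGen (R α0 c) x y)
    (he : c x = c y) : Relation.TransGen α0.toRel x y := by
  induction h with
  | single h =>
    rcases h with ⟨h, _⟩ | ⟨_, h2⟩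
    · exact Relation.TransGen.single h
    · omega
  | tail hxb hby ih =>
    have h1 := R_transGen_mono hxb
    have h2 := R_mono hby
    have hxb' : c x = _ := le_antisymm h1 (by omega)
    rcases hby with ⟨h, h'⟩ | ⟨_, h'⟩
    · exact Relation.TransGen.tail (ih hxb') h
    · omega

lemma R_acyclic {c : V → ℤ} (v : V) : ¬ Relation.TransGen (R α0 c) v v := by
  intro h
  exact α0.acyclic v (R_transGen_level h rfl)

lemma R_asymm {c : V → ℤ} {x y : V} (h : R α0 c x y) : ¬ R α0 c y x := by
  intro h'
  exact R_acyclic (α0 := α0) x (Relation.TransGen.tail (Relation.TransGen.single h) h')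

variable (α0) in
/-- The acyclic orientation determined by a compatible height function. -/
def orient (c : V → ℤ) (hc : Compat α0 c) : AcyclicOrientation G where
  toRel := R α0 c
  adj_of_rel _ _ h := R_adj h
  rel_total _ _ h := R_total hc h
  asymm _ _ h := R_asymm h
  acyclic _ := R_acyclic _

@[simp] lemma orient_toRel (c : V → ℤ) (hc : Compat α0 c) :
    (orient α0 c hc).toRel = R α0 c := rfl

lemma compat_zero : Compat α0 (0 : V → ℤ) := fun _ _ _ => Or.inl rfl

lemma orient_zero (α : AcyclicOrientation G) : orient α 0 compat_zero = α := by
  apply AO.ext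
  funext a b
  simp only [orient_toRel]
  apply propext
  constructor
  · rintro (⟨h, _⟩ | ⟨h, h2⟩)
    · exact h
    · simp at h2
  · intro h; exact Or.inl ⟨h, rfl⟩

section Flip

open Classical in
noncomputable def flipc (c : V → ℤ) (v w : V) : V → ℤ :=
  fun u => c u + (if u = v then 1 else 0) - (if u = w then 1 else 0)

variable {c : V → ℤ} {v w : V}

lemma flipc_v (hvw : v ≠ w) : flipc c v w v = c v + 1 := by
  simp [flipc, hvw]

lemma flipc_w (hvw : v ≠ w) : flipc c v w w = c w - 1 := by
  simp [flipc, Ne.symm hvw]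

lemma flipc_other {u : V} (h1 : u ≠ v) (h2 : u ≠ w) : flipc c v w u = c u := by
  simp [flipc, h1, h2]

/-- Source helper facts. -/
lemma src_out (hc : Compat α0 c) (hv : ∀ u, ¬ R α0 c u v) {b : V} (h : α0.toRel v b) :
    c v = c b := by
  rcases hc _ _ h with he | he
  · exact he
  · exact absurd (Or.inr ⟨h, he⟩) (hv b)

lemma src_in (hc : Compat α0 c) (hv : ∀ u, ¬ R α0 c u v) {a : V} (h : α0.toRel a v) :
    c a = c v + 1 := by
  rcases hc _ _ h with he | he
  · exact absurd (Or.inl ⟨h, he⟩) (hv a)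
  · exact he

lemma snk_out (hc : Compat α0 c) (hw : ∀ u, ¬ R α0 c w u) {b : V} (h : α0.toRel w b) :
    c w = c b + 1 := by
  rcases hc _ _ h with he | he
  · exact absurd (Or.inl ⟨h, he⟩) (hw b)
  · exact he

lemma snk_in (hc : Compat α0 c) (hw : ∀ u, ¬ R α0 c w u) {a : V} (h : α0.toRel a w) :
    c a = c w := by
  rcases hc _ _ h with he | he
  · exact he
  · exact absurd (Or.inr ⟨h, he⟩) (hw a)

lemma flip_compat (hc : Compat α0 c) (hvw : v ≠ w) (hadj : ¬ G.Adj v w)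
    (hv : ∀ u, ¬ R α0 c u v) (hw : ∀ u, ¬ R α0 c w u) :
    Compat α0 (flipc c v w) := by
  intro a b hab
  have hnself : a ≠ b := (α0.adj_of_rel _ _ hab).ne
  by_cases hav : a = v
  · subst hav
    have hbw : b ≠ w := fun h => hadj (h ▸ α0.adj_of_rel _ _ hab)
    rw [flipc_v hvw, flipc_other (Ne.symm hnself) hbw]
    have := src_out hc hv hab
    omega
  by_cases haw : a = w
  · subst haw
    have hbv : b ≠ v := fun h => hadj (G.adj_symm (h ▸ α0.adj_of_rel _ _ hab))
    rw [flipc_w hvw, flipc_other hbv (Ne.symm hnself)]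
    have := snk_out hc hw hab
    omega
  rw [flipc_other hav haw]
  by_cases hbv : b = v
  · subst hbv
    rw [flipc_v hvw]
    have := src_in hc hv hab
    omega
  by_cases hbw : b = w
  · subst hbw
    rw [flipc_w hvw]
    have := snk_in hc hw hab
    omega
  rw [flipc_other hbv hbw]
  exact hc _ _ hab

lemma flip_iff (hc : Compat α0 c) (hvw : v ≠ w) (hadj : ¬ G.Adj v w)
    (hv : ∀ u, ¬ R α0 c u v) (hw : ∀ u, ¬ R α0 c w u) (a b : V) :
    R α0 (flipc c v w) a b ↔
      ((a ≠ v ∧ a ≠ w ∧ b ≠ v ∧ b ≠ w) ∧ R α0 c a b) ∨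
      ((a = v ∨ a = w ∨ b = v ∨ b = w) ∧ R α0 c b a) := by
  have hnvw : ¬ α0.toRel v w := fun h => hadj (α0.adj_of_rel _ _ h)
  have hnwv : ¬ α0.toRel w v := fun h => hadj (G.adj_symm (α0.adj_of_rel _ _ h))
  have hself : ∀ x, ¬ α0.toRel x x := fun x h => (G.loopless.irrefl x (α0.adj_of_rel _ _ h)).elim
  simp only [R]
  by_cases hav : a = v
  · subst hav
    by_cases hbv : b = a
    · subst hbv
      constructor
      · rintro (⟨h, _⟩ | ⟨h, _⟩) <;> exact (hself _ h).elim
      · rintro (⟨_, (⟨h, _⟩ | ⟨h, _⟩)⟩ | ⟨_, (⟨h, _⟩ | ⟨h, _⟩)⟩) <;> exact (hself _ h).elim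
    by_cases hbw : b = w
    · subst hbw
      constructor
      · rintro (⟨h, _⟩ | ⟨h, _⟩) <;> [exact (hnvw h).elim; exact (hnwv h).elim]
      · rintro (⟨⟨h, _⟩, _⟩ | ⟨_, (⟨h, _⟩ | ⟨h, _⟩)⟩)
        · exact (h rfl).elim
        · exact (hnwv h).elim
        · exact (hnvw h).elim
    · -- a = v, b ∉ {v, w} : both sides false
      rw [flipc_v hvw, flipc_other hbv hbw]
      constructor
      · rintro (⟨h, he⟩ | ⟨h, he⟩)
        · have := src_out hc hv h; omega
        · have := src_in hc hv h; omega
      · rintro (⟨⟨h, _⟩, _⟩ | ⟨_, h⟩)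
        · exact (h rfl).elim
        · exact (hv b h).elim
  by_cases haw : a = w
  · subst haw
    by_cases hbv : b = v
    · subst hbv
      constructor
      · rintro (⟨h, _⟩ | ⟨h, _⟩) <;> [exact (hnwv h).elim; exact (hnvw h).elim]
      · rintro (⟨⟨_, h, _⟩, _⟩ | ⟨_, (⟨h, _⟩ | ⟨h, _⟩)⟩)
        · exact (h rfl).elim
        · exact (hnvw h).elim
        · exact (hnwv h).elim
    by_cases hbw : b = a
    · subst hbw
      constructor
      · rintro (⟨h, _⟩ | ⟨h, _⟩) <;> exact (hself _ h).elim
      · rintro (⟨_, (⟨h, _⟩ | ⟨h, _⟩)⟩ | ⟨_, (⟨h, _⟩ | ⟨h, _⟩)⟩) <;> exact (hself _ h).elim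
    · -- a = w, b ∉ {v,w} : LHS ↔ α0 w b ∨ α0 b w ↔ R c b w
      rw [flipc_w hvw, flipc_other hbv hbw]
      constructor
      · rintro (⟨h, he⟩ | ⟨h, he⟩)
        · exact Or.inr ⟨Or.inr (Or.inl rfl), Or.inr ⟨h, snk_out hc hw h⟩⟩
        · exact Or.inr ⟨Or.inr (Or.inl rfl), Or.inl ⟨h, snk_in hc hw h⟩⟩
      · rintro (⟨⟨_, h, _⟩, _⟩ | ⟨_, (⟨h, _⟩ | ⟨h, _⟩)⟩)
        · exact (h rfl).elim
        · exact Or.inr ⟨h, by have := snk_in hc hw h; omega⟩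
        · exact Or.inl ⟨h, by have := snk_out hc hw h; omega⟩
  by_cases hbv : b = v
  · subst hbv
    -- a ∉ {v,w}, b = v : LHS ↔ α0 a v ∨ α0 v a ↔ R c v a
    rw [flipc_other hav haw, flipc_v hvw]
    constructor
    · rintro (⟨h, he⟩ | ⟨h, he⟩)
      · exact Or.inr ⟨Or.inr (Or.inr (Or.inl rfl)), Or.inr ⟨h, src_in hc hv h⟩⟩
      · exact Or.inr ⟨Or.inr (Or.inr (Or.inl rfl)), Or.inl ⟨h, src_out hc hv h⟩⟩
    · rintro (⟨⟨_, _, h, _⟩, _⟩ | ⟨_, (⟨h, _⟩ | ⟨h, _⟩)⟩)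
      · exact (h rfl).elim
      · exact Or.inr ⟨h, by have := src_out hc hv h; omega⟩
      · exact Or.inl ⟨h, by have := src_in hc hv h; omega⟩
  by_cases hbw : b = w
  · subst hbw
    -- a ∉ {v,w}, b = w : both sides false
    rw [flipc_other hav haw, flipc_w hvw]
    constructor
    · rintro (⟨h, he⟩ | ⟨h, he⟩)
      · have := snk_in hc hw h; omega
      · have := snk_out hc hw h; omega
    · rintro (⟨⟨_, _, _, h⟩, _⟩ | ⟨_, h⟩)
      · exact (h rfl).elim
      · exact (hw a h).elim
  · rw [flipc_other hav haw, flipc_other hbv hbw]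
    constructor
    · intro h
      exact Or.inl ⟨⟨hav, haw, hbv, hbw⟩, h⟩
    · rintro (⟨_, h⟩ | ⟨(h | h | h | h), _⟩)
      · exact h
      all_goals first
        | exact (hav h).elim | exact (haw h).elim | exact (hbv h).elim | exact (hbw h).elim

end Flip

end DFP

namespace DFP

variable {V : Type} [Fintype V] {G : SimpleGraph V} {α0 : AcyclicOrientation G}

section Greedy

lemma exists_source {c D : V → ℤ} (hc : Compat α0 c) (hD : Compat α0 D)
    (hex : ∃ u, c u < D u) : ∃ v, (∀ u, ¬ R α0 c u v) ∧ c v < D v := by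
  have hwf : WellFounded (Relation.TransGen (R α0 c)) := by
    have : IsIrrefl V (Relation.TransGen (R α0 c)) := ⟨fun v => R_acyclic v⟩
    exact Finite.wellFounded_of_trans_of_irrefl _
  obtain ⟨v, hv, hmin⟩ := hwf.has_min {u | c u < D u} hex
  replace hv : c v < D v := hv
  refine ⟨v, fun u hu => ?_, hv⟩
  have huS : c u < D u := by
    rcases hu with ⟨h, he⟩ | ⟨h, he⟩
    · rcases hD _ _ h with h' | h' <;> omega
    · rcases hD _ _ h with h' | h' <;> omega
  exact hmin u huS (Relation.TransGen.single hu)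

lemma exists_sink {c D : V → ℤ} (hc : Compat α0 c) (hD : Compat α0 D)
    (hex : ∃ u, D u < c u) : ∃ w, (∀ u, ¬ R α0 c w u) ∧ D w < c w := by
  have hwf : WellFounded (Relation.TransGen (Function.swap (R α0 c))) := by
    have : IsIrrefl V (Relation.TransGen (Function.swap (R α0 c))) :=
      ⟨fun v h => R_acyclic v (Relation.transGen_swap.mp h)⟩
    exact Finite.wellFounded_of_trans_of_irrefl _
  obtain ⟨w, hw, hmin⟩ := hwf.has_min {u | D u < c u} hex
  replace hw : D w < c w := hw
  refine ⟨w, fun u hu => ?_, hw⟩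
  have huS : D u < c u := by
    rcases hu with ⟨h, he⟩ | ⟨h, he⟩
    · rcases hD _ _ h with h' | h' <;> omega
    · rcases hD _ _ h with h' | h' <;> omega
  exact hmin u huS (Relation.TransGen.single hu)

lemma nonadj_of_lt {c D : V → ℤ} (hc : Compat α0 c) (hD : Compat α0 D)
    {v w : V} (h1 : c v < D v) (h2 : D w < c w) : v ≠ w ∧ ¬ G.Adj v w := by
  constructor
  · rintro rfl; omega
  · intro hadj
    rcases α0.rel_total v w hadj with h | h
    · have e1 := hc _ _ h; have e2 := hD _ _ h; omega
    · have e1 := hc _ _ h; have e2 := hD _ _ h; omega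

lemma sum_flipc (c : V → ℤ) {v w : V} (hvw : v ≠ w) (f : V → ℤ) :
    ∑ u, (f u - flipc c v w u) = (∑ u, (f u - c u)) := by
  classical
  have h : ∀ u, f u - flipc c v w u
      = (f u - c u) - (if u = v then (1:ℤ) else 0) + (if u = w then (1:ℤ) else 0) := by
    intro u; simp only [flipc]; split <;> split <;> ring
  rw [Finset.sum_congr rfl (fun u _ => h u), Finset.sum_add_distrib,
    Finset.sum_sub_distrib, Finset.sum_ite_eq' Finset.univ v (fun _ => (1:ℤ)),
    Finset.sum_ite_eq' Finset.univ w (fun _ => (1:ℤ))]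
  simp

lemma natAbs_flipc (c D : V → ℤ) {v w : V} (hvw : v ≠ w)
    (h1 : c v < D v) (h2 : D w < c w) :
    (∑ u, (D u - flipc c v w u).natAbs) + 2 = ∑ u, (D u - c u).natAbs := by
  classical
  have key : ∀ u, (D u - c u).natAbs
      = (D u - flipc c v w u).natAbs + (if u = v then 1 else 0) + (if u = w then 1 else 0) := by
    intro u
    by_cases huv : u = v
    · subst huv
      rw [flipc_v hvw, if_pos rfl, if_neg hvw]
      omega
    by_cases huw : u = w
    · subst huw
      rw [flipc_w hvw, if_neg huv, if_pos rfl]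
      omega
    · rw [flipc_other huv huw, if_neg huv, if_neg huw]
      omega
  rw [Finset.sum_congr rfl (fun u _ => key u), Finset.sum_add_distrib,
    Finset.sum_add_distrib]
  have e1 : (∑ u : V, (if u = v then 1 else 0)) = 1 := by
    rw [Finset.sum_ite_eq' Finset.univ v (fun _ => 1)]; simp
  have e2 : (∑ u : V, (if u = w then 1 else 0)) = 1 := by
    rw [Finset.sum_ite_eq' Finset.univ w (fun _ => 1)]; simp
  omega

lemma reachableIn_step {X : Type*} {r : X → X → Prop} {a b d : X} {t : ℕ}
    (hab : r a b) (h : ReachableIn r t b d) : ReachableIn r (t + 1) a d := by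
  obtain ⟨m, hm, f, hf0, hfm, hstep⟩ := h
  refine ⟨m + 1, by omega, fun i => if i = 0 then a else f (i - 1), rfl, by simp [hfm], ?_⟩
  intro i hi
  match i with
  | 0 => simpa [hf0] using hab
  | (j+1) => simpa using hstep j (by omega)

lemma reachableIn_mono {X : Type*} {r : X → X → Prop} {a b : X} {t t' : ℕ}
    (htt : t ≤ t') (h : ReachableIn r t a b) : ReachableIn r t' a b := by
  obtain ⟨m, hm, f, hf⟩ := h
  exact ⟨m, le_trans hm htt, f, hf⟩

lemma greedy (D : V → ℤ) (hD : Compat α0 D) :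
    ∀ (t : ℕ) (c : V → ℤ) (hc : Compat α0 c),
    (∑ u, (D u - c u)) = 0 → (∑ u, (D u - c u).natAbs) ≤ 2 * t →
    ReachableIn IsDoubleFlip t (orient α0 c hc) (orient α0 D hD) := by
  intro t
  induction t with
  | zero =>
    intro c hc hsum hsize
    have hcD : c = D := by
      funext u
      have h0 : (D u - c u).natAbs = 0 := by
        have h1 : (D u - c u).natAbs ≤ ∑ x : V, (D x - c x).natAbs :=
          Finset.single_le_sum (f := fun x => (D x - c x).natAbs)
            (fun i _ => Nat.zero_le _) (Finset.mem_univ u)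
        omega
      omega
    subst hcD
    exact ⟨0, le_refl _, fun _ => orient α0 c hc, rfl, rfl, fun i hi => by omega⟩
  | succ t ih =>
    intro c hc hsum hsize
    by_cases hcD : c = D
    · subst hcD
      exact ⟨0, by omega, fun _ => orient α0 c hc, rfl, rfl, fun i hi => by omega⟩
    · have hne : ∃ u, D u - c u ≠ 0 := by
        by_contra h
        push_neg at h
        exact hcD (funext fun u => by have := h u; omega)
      obtain ⟨u₀, hu₀⟩ := hne
      have hpos : ∃ u, c u < D u := by
        by_contra h
        push_neg at h
        have hlt : (∑ u, (D u - c u)) < ∑ u : V, (0:ℤ) := by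
          apply Finset.sum_lt_sum (fun i _ => by have := h i; omega)
          exact ⟨u₀, Finset.mem_univ u₀, by have := h u₀; omega⟩
        simp only [Finset.sum_const_zero] at hlt
        omega
      have hneg : ∃ u, D u < c u := by
        by_contra h
        push_neg at h
        have hlt : (∑ u : V, (0:ℤ)) < ∑ u, (D u - c u) := by
          apply Finset.sum_lt_sum (fun i _ => by have := h i; omega)
          refine ⟨u₀, Finset.mem_univ u₀, by have := h u₀; omega⟩
        simp only [Finset.sum_const_zero] at hlt
        omega
      obtain ⟨v, hv, hvlt⟩ := exists_source hc hD hpos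
      obtain ⟨w, hw, hwlt⟩ := exists_sink hc hD hneg
      obtain ⟨hvw, hadj⟩ := nonadj_of_lt hc hD hvlt hwlt
      have hc' : Compat α0 (flipc c v w) := flip_compat hc hvw hadj hv hw
      have hflip : IsDoubleFlip (orient α0 c hc) (orient α0 (flipc c v w) hc') :=
        ⟨v, w, hvw, hadj, hv, hw, fun a b => flip_iff hc hvw hadj hv hw a b⟩
      have hsum' : (∑ u, (D u - flipc c v w u)) = 0 := by
        rw [sum_flipc c hvw D]; exact hsum
      have hsize' : (∑ u, (D u - flipc c v w u).natAbs) ≤ 2 * t := by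
        have := natAbs_flipc c D hvw hvlt hwlt
        omega
      exact reachableIn_step hflip (ih (flipc c v w) hc' hsum' hsize')

end Greedy

end DFP

namespace DFP

variable {V : Type} [Fintype V] {G : SimpleGraph V} {α0 : AcyclicOrientation G}

section Forward

/-- Any orientation double-flip equivalent to `α0` is `orient α0 D` for a compatible `D`
summing to zero. -/
lemma exists_height {α'' : AcyclicOrientation G} (h : DoubleFlipEquiv α0 α'') :
    ∃ (D : V → ℤ) (hD : Compat α0 D), (∑ u, D u) = 0 ∧ orient α0 D hD = α'' := by
  induction h with
  | refl => exact ⟨0, compat_zero, by simp, orient_zero α0⟩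
  | tail hab hflip ih =>
    obtain ⟨D, hD, hsum, heq⟩ := ih
    obtain ⟨v, w, hvw, hadj, hsrc, hsnk, hiff⟩ := hflip
    subst heq
    have hv : ∀ u, ¬ R α0 D u v := hsrc
    have hw : ∀ u, ¬ R α0 D w u := hsnk
    have hD' : Compat α0 (flipc D v w) := flip_compat hD hvw hadj hv hw
    refine ⟨flipc D v w, hD', ?_, ?_⟩
    · have := sum_flipc D hvw (0 : V → ℤ)
      simp only [Pi.zero_apply, zero_sub, Finset.sum_neg_distrib] at this
      omega
    · apply AO.ext
      funext a b
      apply propext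
      exact (flip_iff hD hvw hadj hv hw a b).trans (hiff a b).symm

end Forward

section Spread

lemma walk_spread {D : V → ℤ} (hD : Compat α0 D) :
    ∀ {a b : V} (p : G.Walk a b), (D a - D b).natAbs ≤ p.length := by
  intro a b p
  induction p with
  | nil => simp
  | @cons x y z hadj q ih =>
    have h1 : (D x - D y).natAbs ≤ 1 := by
      rcases α0.rel_total _ _ hadj with h | h
      · rcases hD _ _ h with h' | h' <;> omega
      · rcases hD _ _ h with h' | h' <;> omega
    simp only [SimpleGraph.Walk.length_cons]
    omega

lemma reachable_spread {D : V → ℤ} (hD : Compat α0 D) {a b : V}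
    (h : G.Reachable a b) : (D a - D b).natAbs < Fintype.card V := by
  classical
  obtain ⟨p⟩ := h
  calc (D a - D b).natAbs ≤ p.bypass.length := walk_spread hD p.bypass
    _ < Fintype.card V := p.bypass_isPath.length_lt

end Spread

end DFP

namespace DFP

variable {V : Type} [Fintype V] {G : SimpleGraph V}

section Reduce

open Finset

lemma improve (D : V → ℤ)
    (hspread : ∀ a b, G.Reachable a b → (D a - D b).natAbs < Fintype.card V)
    (hsum : ∑ u, D u = 0) (u0 : V) (hbig : 2 * (Fintype.card V : ℤ) ^ 2 < D u0) :
    ∃ D₂ : V → ℤ, (∀ a b, G.Reachable a b → D₂ a - D₂ b = D a - D b) ∧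
      (∑ u, D₂ u) = 0 ∧ (∑ u, D₂ u * D₂ u) < ∑ u, D u * D u := by
  classical
  have hn1 : 1 ≤ Fintype.card V := Fintype.card_pos_iff.mpr ⟨u0⟩
  set n : ℕ := Fintype.card V with hn
  have hnz : (1:ℤ) ≤ (n:ℤ) := by exact_mod_cast hn1
  have hu1 : ∃ u1, D u1 < 0 := by
    by_contra hcon; push_neg at hcon
    have h1 : D u0 ≤ ∑ u, D u := Finset.single_le_sum (fun i _ => hcon i) (mem_univ u0)
    have h2 : (0:ℤ) ≤ (n:ℤ)^2 := by positivity
    omega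
  obtain ⟨u1, hu1⟩ := hu1
  set K1 : Finset V := univ.filter (fun u => G.Reachable u0 u) with hK1def
  set K2 : Finset V := univ.filter (fun u => G.Reachable u1 u) with hK2def
  have memK1 : ∀ u, u ∈ K1 ↔ G.Reachable u0 u := by
    intro u; simp [hK1def]
  have memK2 : ∀ u, u ∈ K2 ↔ G.Reachable u1 u := by
    intro u; simp [hK2def]
  have hDK1 : ∀ u ∈ K1, 2 * (n:ℤ)^2 - (n:ℤ) + 1 ≤ D u := by
    intro u hu
    have := hspread u0 u ((memK1 u).mp hu)
    have h2 : (1:ℤ) ≤ (n:ℤ)^2 := by nlinarith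
    omega
  have hDK2 : ∀ u ∈ K2, D u ≤ (n:ℤ) := by
    intro u hu
    have := hspread u1 u ((memK2 u).mp hu)
    omega
  have hdisj : Disjoint K1 K2 := by
    rw [Finset.disjoint_left]
    intro u hu1' hu2'
    have hr : G.Reachable u0 u1 := ((memK1 u).mp hu1').trans ((memK2 u).mp hu2').symm
    have := hspread u0 u1 hr
    have h2 : (n:ℤ) ≤ (n:ℤ)^2 := by nlinarith [sq_nonneg ((n:ℤ) - 1)]
    omega
  have hu0K1 : u0 ∈ K1 := (memK1 u0).mpr (SimpleGraph.Reachable.refl u0)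
  have hu1K2 : u1 ∈ K2 := (memK2 u1).mpr (SimpleGraph.Reachable.refl u1)
  have ha1 : 1 ≤ K1.card := Finset.card_pos.mpr ⟨u0, hu0K1⟩
  have ha2 : 1 ≤ K2.card := Finset.card_pos.mpr ⟨u1, hu1K2⟩
  have hcardle : K1.card + K2.card ≤ n := by
    rw [← Finset.card_union_of_disjoint hdisj]
    exact Finset.card_le_univ _
  set A1 : ℤ := (K1.card : ℤ) with hA1
  set A2 : ℤ := (K2.card : ℤ) with hA2
  have hA1pos : 1 ≤ A1 := by rw [hA1]; exact_mod_cast ha1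
  have hA2pos : 1 ≤ A2 := by rw [hA2]; exact_mod_cast ha2
  have hAle : A1 + A2 ≤ (n:ℤ) := by rw [hA1, hA2]; exact_mod_cast hcardle
  refine ⟨fun u => D u - (if u ∈ K1 then A2 else 0) + (if u ∈ K2 then A1 else 0), ?_, ?_, ?_⟩
  · intro a b hr
    dsimp only
    have e1 : (a ∈ K1) ↔ (b ∈ K1) := by
      rw [memK1, memK1]
      exact ⟨fun h => h.trans hr, fun h => h.trans hr.symm⟩
    have e2 : (a ∈ K2) ↔ (b ∈ K2) := by
      rw [memK2, memK2]
      exact ⟨fun h => h.trans hr, fun h => h.trans hr.symm⟩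
    by_cases h1 : a ∈ K1 <;> by_cases h2 : a ∈ K2
    · simp only [if_pos h1, if_pos h2, if_pos (e1.mp h1), if_pos (e2.mp h2)]; ring
    · simp only [if_pos h1, if_neg h2, if_pos (e1.mp h1),
        if_neg (fun hh => h2 (e2.mpr hh))]; ring
    · simp only [if_neg h1, if_pos h2, if_neg (fun hh => h1 (e1.mpr hh)),
        if_pos (e2.mp h2)]; ring
    · simp only [if_neg h1, if_neg h2, if_neg (fun hh => h1 (e1.mpr hh)),
        if_neg (fun hh => h2 (e2.mpr hh))]; ring
  · rw [Finset.sum_add_distrib, Finset.sum_sub_distrib]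
    rw [Finset.sum_ite_mem, Finset.sum_ite_mem, Finset.univ_inter, Finset.univ_inter,
      Finset.sum_const, Finset.sum_const, nsmul_eq_mul, nsmul_eq_mul]
    rw [hsum, ← hA1, ← hA2]
    ring
  · have key : ∀ u ∈ univ,
        (D u - (if u ∈ K1 then A2 else 0) + (if u ∈ K2 then A1 else 0)) *
        (D u - (if u ∈ K1 then A2 else 0) + (if u ∈ K2 then A1 else 0))
        = D u * D u + ((if u ∈ K1 then A2 * A2 - 2 * A2 * D u else 0)
          + (if u ∈ K2 then A1 * A1 + 2 * A1 * D u else 0)) := by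
      intro u _
      by_cases h1 : u ∈ K1
      · have h2 : u ∉ K2 := Finset.disjoint_left.mp hdisj h1
        simp only [if_pos h1, if_neg h2]; ring
      · by_cases h2 : u ∈ K2
        · simp only [if_pos h2, if_neg h1]; ring
        · simp only [if_neg h1, if_neg h2]; ring
    rw [Finset.sum_congr rfl key, Finset.sum_add_distrib, Finset.sum_add_distrib,
      Finset.sum_ite_mem, Finset.sum_ite_mem, Finset.univ_inter, Finset.univ_inter]
    have hb1 : (∑ u ∈ K1, (A2 * A2 - 2 * A2 * D u))
        ≤ K1.card • (A2 * A2 - 2 * A2 * (2 * (n:ℤ)^2 - (n:ℤ) + 1)) := by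
      apply Finset.sum_le_card_nsmul
      intro u hu
      have hd := hDK1 u hu
      nlinarith
    have hb2 : (∑ u ∈ K2, (A1 * A1 + 2 * A1 * D u))
        ≤ K2.card • (A1 * A1 + 2 * A1 * (n:ℤ)) := by
      apply Finset.sum_le_card_nsmul
      intro u hu
      have hd := hDK2 u hu
      nlinarith
    rw [nsmul_eq_mul, ← hA1] at hb1
    rw [nsmul_eq_mul, ← hA2] at hb2
    have hfact : A1 * (A2 * A2 - 2 * A2 * (2 * (n:ℤ)^2 - (n:ℤ) + 1))
        + A2 * (A1 * A1 + 2 * A1 * (n:ℤ))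
        = A1 * A2 * (A1 + A2 + 4 * (n:ℤ) - 2 - 4 * (n:ℤ)^2) := by ring
    have hN1 : (1:ℤ) ≤ (n:ℤ) := by exact_mod_cast hn1
    have hstep : A1 + A2 + 4 * (n:ℤ) - 2 - 4 * (n:ℤ)^2 ≤ -1 := by
      nlinarith [mul_nonneg (by linarith : (0:ℤ) ≤ 4*(n:ℤ) - 1) (by linarith : (0:ℤ) ≤ (n:ℤ) - 1)]
    have hprod : A1 * A2 * (A1 + A2 + 4 * (n:ℤ) - 2 - 4 * (n:ℤ)^2) ≤ -1 := by
      have h1 : 1 ≤ A1 * A2 := by nlinarith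
      nlinarith
    linarith [hb1, hb2]

end Reduce

end DFP

namespace DFP

variable {V : Type} [Fintype V] {G : SimpleGraph V}

lemma reduce : ∀ (N : ℕ) (D : V → ℤ),
    (∀ a b, G.Reachable a b → (D a - D b).natAbs < Fintype.card V) →
    (∑ u, D u) = 0 → (∑ u, D u * D u) ≤ (N : ℤ) →
    ∃ D' : V → ℤ, (∀ a b, G.Reachable a b → D' a - D' b = D a - D b) ∧
      (∑ u, D' u) = 0 ∧ ∀ u, (D' u).natAbs ≤ 2 * Fintype.card V ^ 2 := by
  intro N
  induction N with
  | zero =>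
    intro D hspread hsum hphi
    refine ⟨D, fun a b _ => rfl, hsum, fun u => ?_⟩
    have h1 : D u * D u ≤ ∑ x, D x * D x :=
      Finset.single_le_sum (f := fun x => D x * D x)
        (fun i _ => mul_self_nonneg _) (Finset.mem_univ u)
    have h2 : D u = 0 := by
      simp only [Nat.cast_zero] at hphi
      nlinarith
    simp [h2]
  | succ N ih =>
    intro D hspread hsum hphi
    by_cases hall : ∀ u, (D u).natAbs ≤ 2 * Fintype.card V ^ 2
    · exact ⟨D, fun a b _ => rfl, hsum, hall⟩
    push_neg at hall
    obtain ⟨u0, hu0⟩ := hall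
    have hu0' : (2 * (Fintype.card V : ℤ) ^ 2) < (D u0).natAbs := by
      have : ((2 * Fintype.card V ^ 2 : ℕ) : ℤ) < ((D u0).natAbs : ℤ) := by
        exact_mod_cast hu0
      push_cast at this ⊢
      omega
    have hstep : ∃ D₂ : V → ℤ, (∀ a b, G.Reachable a b → D₂ a - D₂ b = D a - D b) ∧
        (∑ u, D₂ u) = 0 ∧ (∑ u, D₂ u * D₂ u) < ∑ u, D u * D u := by
      rcases le_or_gt (D u0) 0 with hneg | hpos
      · have hbig : 2 * (Fintype.card V : ℤ) ^ 2 < (fun u => -D u) u0 := by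
          dsimp only
          omega
        obtain ⟨E, hE1, hE2, hE3⟩ := improve (fun u => -D u)
          (fun a b h => by have := hspread a b h; omega)
          (by rw [Finset.sum_neg_distrib, hsum, neg_zero]) u0 hbig
        refine ⟨fun u => -E u, ?_, ?_, ?_⟩
        · intro a b h
          have := hE1 a b h
          dsimp only at this ⊢
          omega
        · dsimp only
          rw [Finset.sum_neg_distrib, hE2, neg_zero]
        · have e1 : (∑ u, (fun u => -E u) u * (fun u => -E u) u) = ∑ u, E u * E u :=
            Finset.sum_congr rfl (fun u _ => by dsimp only; ring)
          have e2 : (∑ u, (fun u => -D u) u * (fun u => -D u) u) = ∑ u, D u * D u :=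
            Finset.sum_congr rfl (fun u _ => by dsimp only; ring)
          rw [e1]
          rw [e2] at hE3
          exact hE3
      · have hbig : 2 * (Fintype.card V : ℤ) ^ 2 < D u0 := by omega
        exact improve D hspread hsum u0 hbig
    obtain ⟨D₂, hP, hsum₂, hphi₂⟩ := hstep
    have hspread₂ : ∀ a b, G.Reachable a b → (D₂ a - D₂ b).natAbs < Fintype.card V := by
      intro a b h
      rw [hP a b h]
      exact hspread a b h
    have hphi₂' : (∑ u, D₂ u * D₂ u) ≤ (N : ℤ) := by
      push_cast at hphi ⊢
      omega
    obtain ⟨D', hP', hsum', hbound⟩ := ih D₂ hspread₂ hsum₂ hphi₂'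
    exact ⟨D', fun a b h => (hP' a b h).trans (hP a b h), hsum', hbound⟩

end DFP


/-- There is an absolute constant `C > 0` such that for every finite simple
graph `G` on `n` vertices and every pair of double-flip equivalent acyclic orientations
`α`, `α''` of `G`, `α''` can be reached from `α` by at most `C * n⁴` double-flips. -/
theorem doubleFlipEquiv_reachableIn_poly :
    ∃ C : ℕ, 0 < C ∧ ∀ (V : Type) [Fintype V] (G : SimpleGraph V)
      (α α'' : AcyclicOrientation G), DoubleFlipEquiv α α'' →
        ReachableIn IsDoubleFlip (C * Fintype.card V ^ 4) α α'' := by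
  classical
  refine ⟨1, one_pos, ?_⟩
  intro V _ G α α'' hequiv
  obtain ⟨D, hD, hsum, heq⟩ := DFP.exists_height hequiv
  set n := Fintype.card V with hn
  have hspread : ∀ a b, G.Reachable a b → (D a - D b).natAbs < n :=
    fun a b h => DFP.reachable_spread hD h
  have hphi0 : (0:ℤ) ≤ ∑ u, D u * D u := Finset.sum_nonneg fun i _ => mul_self_nonneg _
  obtain ⟨D', hP, hsum', hbound⟩ := DFP.reduce (∑ u, D u * D u).toNat D hspread hsum
    (by rw [Int.toNat_of_nonneg hphi0])
  have hD' : DFP.Compat α D' := by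
    intro a b hab
    have e := hP a b (α.adj_of_rel a b hab).reachable
    rcases hD a b hab with h | h <;> omega
  have horient : DFP.orient α D' hD' = α'' := by
    rw [← heq]
    apply DFP.AO.ext
    funext a b
    apply propext
    constructor
    · rintro (⟨h, he⟩ | ⟨h, he⟩)
      · have e := hP a b (α.adj_of_rel a b h).reachable
        exact Or.inl ⟨h, by omega⟩
      · have e := hP b a (α.adj_of_rel b a h).reachable
        exact Or.inr ⟨h, by omega⟩
    · rintro (⟨h, he⟩ | ⟨h, he⟩)
      · have e := hP a b (α.adj_of_rel a b h).reachable
        exact Or.inl ⟨h, by omega⟩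
      · have e := hP b a (α.adj_of_rel b a h).reachable
        exact Or.inr ⟨h, by omega⟩
  have hsumc : (∑ u, (D' u - (0 : V → ℤ) u)) = 0 := by
    simpa using hsum'
  have hsizec : (∑ u, (D' u - (0 : V → ℤ) u).natAbs) ≤ 2 * n ^ 3 := by
    have h1 : (∑ u, (D' u - (0 : V → ℤ) u).natAbs) ≤ (Finset.univ (α := V)).card • (2 * n ^ 2) := by
      apply Finset.sum_le_card_nsmul
      intro u _
      simpa using hbound u
    simp only [Finset.card_univ, smul_eq_mul] at h1
    calc (∑ u, (D' u - (0 : V → ℤ) u).natAbs) ≤ n * (2 * n ^ 2) := h1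
      _ = 2 * n ^ 3 := by ring
  have hreach := DFP.greedy D' hD' (n ^ 3) 0 DFP.compat_zero hsumc hsizec
  rw [DFP.orient_zero α, horient] at hreach
  have hle : n ^ 3 ≤ 1 * n ^ 4 := by
    rcases Nat.eq_zero_or_pos n with h | h
    · simp [h]
    · simpa using Nat.pow_le_pow_right h (by norm_num : 3 ≤ 4)
  exact DFP.reachableIn_mono hle hreach
end

section
/- Let G be a finite simple graph on n vertices whose connected components have vertex counts n_1, …, n_r with gcd(n_1, …, n_r) = 1. If α and α″ are acyclic orientations of G that are double-flip equivalent, then α″ can be reached from α by a sequence of at most 2n² double-flips. -/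
open SimpleGraph

section Aux
variable {V : Type*} {G : SimpleGraph V}

lemma AcyclicOrientation.ext' {α β : AcyclicOrientation G} (h : α.toRel = β.toRel) : α = β := by
  cases α; cases β; simp_all

/-- The double flip of `α` at a source `v` and sink `w`. -/
noncomputable def dflip (α : AcyclicOrientation G) (v w : V)
    (hvw : v ≠ w) (hna : ¬ G.Adj v w) (hv : α.IsSource v) (hw : α.IsSink w) :
    AcyclicOrientation G := by
  refine ⟨fun a b => ((a ≠ v ∧ a ≠ w ∧ b ≠ v ∧ b ≠ w) ∧ α.toRel a b) ∨
      ((a = v ∨ a = w ∨ b = v ∨ b = w) ∧ α.toRel b a), ?_, ?_, ?_, ?_⟩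
  · rintro a b (⟨-, h⟩ | ⟨-, h⟩)
    · exact α.adj_of_rel _ _ h
    · exact (α.adj_of_rel _ _ h).symm
  · intro a b hab
    by_cases htouch : a = v ∨ a = w ∨ b = v ∨ b = w
    · rcases α.rel_total a b hab with h | h
      · exact Or.inr (Or.inr ⟨by tauto, h⟩)
      · exact Or.inl (Or.inr ⟨htouch, h⟩)
    · push_neg at htouch
      rcases α.rel_total a b hab with h | h
      · exact Or.inl (Or.inl ⟨⟨htouch.1, htouch.2.1, htouch.2.2.1, htouch.2.2.2⟩, h⟩)
      · exact Or.inr (Or.inl ⟨⟨htouch.2.2.1, htouch.2.2.2, htouch.1, htouch.2.1⟩, h⟩)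
  · rintro a b (⟨hfar, h⟩ | ⟨htouch, h⟩) H
    · rcases H with ⟨hfar', h'⟩ | ⟨htouch', h'⟩
      · exact α.asymm _ _ h h'
      · rcases htouch' with rfl | rfl | rfl | rfl <;> simp_all
    · rcases H with ⟨hfar', h'⟩ | ⟨htouch', h'⟩
      · rcases htouch with rfl | rfl | rfl | rfl <;> simp_all
      · exact α.asymm _ _ h h'
  · -- acyclicity
    set R : V → V → Prop := fun a b => ((a ≠ v ∧ a ≠ w ∧ b ≠ v ∧ b ≠ w) ∧ α.toRel a b) ∨
      ((a = v ∨ a = w ∨ b = v ∨ b = w) ∧ α.toRel b a) with hR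
    have hnotv : ∀ b, ¬ R v b := by
      rintro b (⟨hfar, -⟩ | ⟨-, h⟩)
      · exact hfar.1 rfl
      · exact hv b h
    have hnotw : ∀ a, ¬ R a w := by
      rintro a (⟨hfar, -⟩ | ⟨-, h⟩)
      · exact hfar.2.2.2 rfl
      · exact hw a h
    have hstep : ∀ a b, R a b → a ≠ w → b ≠ v → α.toRel a b := by
      rintro a b (⟨-, h⟩ | ⟨htouch, h⟩) haw hbv
      · exact h
      · rcases htouch with rfl | rfl | rfl | rfl
        · exact absurd h (hv b)
        · exact absurd rfl haw
        · exact absurd rfl hbv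
        · exact absurd h (hw a)
    have key : ∀ x y, Relation.TransGen R x y → x ≠ w → y ≠ v → Relation.TransGen α.toRel x y := by
      intro x y hxy
      induction hxy with
      | single h => intro hx hy; exact Relation.TransGen.single (hstep _ _ h hx hy)
      | tail hxy hyz ih =>
        intro hx hz
        rename_i b c
        have hbw : b ≠ w := by
          rintro rfl
          obtain ⟨m, -, hm⟩ := Relation.TransGen.tail'_iff.mp hxy
          exact hnotw m hm
        have hbv : b ≠ v := fun hb => hnotv c (hb ▸ hyz)
        exact (ih hx hbv).tail (hstep _ _ hyz hbw hz)
    intro u hu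
    have huv : u ≠ v := by
      rintro rfl
      obtain ⟨m, hm, -⟩ := Relation.TransGen.head'_iff.mp hu
      exact hnotv m hm
    have huw : u ≠ w := by
      rintro rfl
      obtain ⟨m, -, hm⟩ := Relation.TransGen.tail'_iff.mp hu
      exact hnotw m hm
    exact α.acyclic u (key u u hu huw huv)

lemma isDoubleFlip_dflip (α : AcyclicOrientation G) (v w : V)
    (hvw : v ≠ w) (hna : ¬ G.Adj v w) (hv : α.IsSource v) (hw : α.IsSink w) :
    IsDoubleFlip α (dflip α v w hvw hna hv hw) :=
  ⟨v, w, hvw, hna, hv, hw, fun _ _ => Iff.rfl⟩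

/-- Compatibility of a flip-count vector `c` with the pair `(α, α'')`. -/
def Compat (α α'' : AcyclicOrientation G) (c : V → ℤ) : Prop :=
  ∀ a b, α.toRel a b → (α''.toRel a b ∧ c a = c b) ∨ (α''.toRel b a ∧ c a = c b + 1)

lemma compat_refl (α : AcyclicOrientation G) : Compat α α (fun _ => 0) :=
  fun _ _ h => Or.inl ⟨h, rfl⟩

lemma compat_shift {α α'' : AcyclicOrientation G} {c : V → ℤ} (hc : Compat α α'' c)
    (d : V → ℤ) (hd : ∀ a b, G.Adj a b → d a = d b) :
    Compat α α'' (fun u => c u + d u) := by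
  intro a b hab
  have hdd := hd a b (α.adj_of_rel _ _ hab)
  rcases hc a b hab with ⟨h1, h2⟩ | ⟨h1, h2⟩
  · refine Or.inl ⟨h1, ?_⟩
    show c a + d a = c b + d b
    omega
  · refine Or.inr ⟨h1, ?_⟩
    show c a + d a = c b + d b + 1
    omega

/-- Extraction of a compatible flip-count vector from a double-flip path. -/
lemma exists_compat [Fintype V] {α α'' : AcyclicOrientation G}
    (h : Relation.ReflTransGen IsDoubleFlip α α'') :
    ∃ c : V → ℤ, Compat α α'' c ∧ ∑ u, c u = 0 := by
  classical
  induction h using Relation.ReflTransGen.head_induction_on with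
  | refl => exact ⟨fun _ => 0, compat_refl α'', by simp⟩
  | head hstep hpath ih =>
    rename_i β γ
    obtain ⟨c, hc, hsum⟩ := ih
    obtain ⟨v, w, hvw, hna, hv, hw, hiff⟩ := hstep
    refine ⟨fun u => c u + ((if u = v then 1 else 0) - (if u = w then 1 else 0)), ?_, ?_⟩
    · intro a b hab
      have hGab : G.Adj a b := β.adj_of_rel _ _ hab
      have hane : a ≠ b := hGab.ne
      by_cases hav : a = v
      · subst hav
        have hbv : b ≠ a := hane.symm
        have hbw : b ≠ w := fun hbw => hna (hbw ▸ hGab)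
        have haw : a ≠ w := hvw
        have hγ : γ.toRel b a := (hiff b a).mpr (Or.inr ⟨Or.inr (Or.inr (Or.inl rfl)), hab⟩)
        rcases hc b a hγ with ⟨h1, h2⟩ | ⟨h1, h2⟩
        · refine Or.inr ⟨h1, ?_⟩
          show c a + _ = c b + _ + 1
          simp [hbv, hbw, haw]
          omega
        · refine Or.inl ⟨h1, ?_⟩
          show c a + _ = c b + _
          simp [hbv, hbw, haw]
          omega
      · by_cases hbw : b = w
        · subst hbw
          have haw : a ≠ b := hane
          have hbv : b ≠ v := fun h' => hvw h'.symm
          have hγ : γ.toRel b a := (hiff b a).mpr (Or.inr ⟨Or.inr (Or.inl rfl), hab⟩)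
          rcases hc b a hγ with ⟨h1, h2⟩ | ⟨h1, h2⟩
          · refine Or.inr ⟨h1, ?_⟩
            show c a + _ = c b + _ + 1
            simp [hav, haw, hbv]
            omega
          · refine Or.inl ⟨h1, ?_⟩
            show c a + _ = c b + _
            simp [hav, haw, hbv]
            omega
        · have haw : a ≠ w := fun h' => hw b (h' ▸ hab)
          have hbv : b ≠ v := fun h' => hv a (h' ▸ hab)
          have hγ : γ.toRel a b := (hiff a b).mpr (Or.inl ⟨⟨hav, haw, hbv, hbw⟩, hab⟩)
          rcases hc a b hγ with ⟨h1, h2⟩ | ⟨h1, h2⟩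
          · refine Or.inl ⟨h1, ?_⟩
            show c a + _ = c b + _
            simp [hav, haw, hbv, hbw]
            omega
          · refine Or.inr ⟨h1, ?_⟩
            show c a + _ = c b + _ + 1
            simp [hav, haw, hbv, hbw]
            omega
    · rw [Finset.sum_add_distrib, hsum, zero_add, Finset.sum_sub_distrib]
      simp [Finset.sum_ite_eq']


lemma ReachableIn.mono {X : Type*} {r : X → X → Prop} {a b : X} {k k' : ℕ}
    (hk : k ≤ k') (h : ReachableIn r k a b) : ReachableIn r k' a b := by
  obtain ⟨m, hm, f, h0, hme, hstep⟩ := h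
  exact ⟨m, hm.trans hk, f, h0, hme, hstep⟩

lemma ReachableIn.refl {X : Type*} {r : X → X → Prop} (a : X) (k : ℕ) :
    ReachableIn r k a a :=
  ⟨0, Nat.zero_le _, fun _ => a, rfl, rfl, fun i hi => absurd hi (Nat.not_lt_zero i)⟩

lemma ReachableIn.head {X : Type*} {r : X → X → Prop} {a b c : X} {k : ℕ}
    (hab : r a b) (h : ReachableIn r k b c) : ReachableIn r (k + 1) a c := by
  obtain ⟨m, hm, f, h0, hme, hstep⟩ := h
  refine ⟨m + 1, by omega, fun i => if i = 0 then a else f (i - 1), by simp, by simp [h0, hme], ?_⟩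
  intro i hi
  match i with
  | 0 => simpa [h0] using hab
  | j + 1 => simpa using hstep j (by omega)

/-- The reverse of an acyclic orientation. -/
def AcyclicOrientation.rev (α : AcyclicOrientation G) : AcyclicOrientation G where
  toRel a b := α.toRel b a
  adj_of_rel a b h := (α.adj_of_rel b a h).symm
  rel_total a b h := (α.rel_total a b h).symm
  asymm a b h h' := α.asymm b a h h'
  acyclic v h := α.acyclic v (by rwa [← Relation.transGen_swap] at h)

lemma AcyclicOrientation.rev_isSource (α : AcyclicOrientation G) (v : V) :
    α.rev.IsSource v ↔ α.IsSink v := Iff.rfl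

lemma exists_source_mem [Finite V] (α : AcyclicOrientation G) (P : Set V) (hne : P.Nonempty)
    (hclosed : ∀ a b, α.toRel a b → b ∈ P → a ∈ P) :
    ∃ v ∈ P, α.IsSource v := by
  haveI : IsTrans V (Relation.TransGen α.toRel) := ⟨fun _ _ _ => Relation.TransGen.trans⟩
  haveI : IsIrrefl V (Relation.TransGen α.toRel) := ⟨fun v h => α.acyclic v h⟩
  have hwf := Finite.wellFounded_of_trans_of_irrefl (Relation.TransGen α.toRel)
  refine ⟨hwf.min P hne, hwf.min_mem P hne, fun u hu => ?_⟩
  exact hwf.not_lt_min P (hclosed u _ hu (hwf.min_mem P hne)) (Relation.TransGen.single hu)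

lemma eq_of_compat {α α'' : AcyclicOrientation G} {c : V → ℤ}
    (hc : Compat α α'' c) (h0 : ∀ u, c u = 0) : α = α'' := by
  apply AcyclicOrientation.ext'
  funext a b
  apply propext
  constructor
  · intro h
    rcases hc a b h with ⟨h1, -⟩ | ⟨-, h2⟩
    · exact h1
    · rw [h0 a, h0 b] at h2; omega
  · intro h
    rcases α.rel_total a b (α''.adj_of_rel a b h) with h' | h'
    · exact h'
    · rcases hc b a h' with ⟨h1, -⟩ | ⟨-, h2⟩
      · exact absurd h1 (α''.asymm a b h)
      · rw [h0 a, h0 b] at h2; omega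

lemma realize [Fintype V] (α'' : AcyclicOrientation G) :
    ∀ (N : ℕ) (α : AcyclicOrientation G) (c : V → ℤ),
      Compat α α'' c → (∑ u, c u = 0) → (∑ u, (c u).toNat = N) →
      ReachableIn IsDoubleFlip N α α'' := by
  classical
  intro N
  induction N using Nat.strong_induction_on with
  | _ N IH =>
    intro α c hc hsum hN
    rcases Nat.eq_zero_or_pos N with rfl | hpos
    · have hle : ∀ u ∈ Finset.univ, c u ≤ 0 := by
        intro u _
        have h3 : (c u).toNat = 0 := Finset.sum_eq_zero_iff.mp hN u (Finset.mem_univ u)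
        omega
      have h0 : ∀ u, c u = 0 := fun u =>
        (Finset.sum_eq_zero_iff_of_nonpos hle).mp hsum u (Finset.mem_univ u)
      rw [eq_of_compat hc h0]
      exact ReachableIn.refl _ _
    · -- there is a vertex with positive count and one with negative count
      have hPne : {u | 0 < c u}.Nonempty := by
        by_contra hcon
        rw [Set.not_nonempty_iff_eq_empty] at hcon
        have hle : ∀ u ∈ Finset.univ, (c u).toNat = 0 := by
          intro u _
          have : ¬ (0 < c u) := fun hlt => by
            have : u ∈ {u | 0 < c u} := hlt
            simp [hcon] at this
          omega
        rw [Finset.sum_eq_zero hle] at hN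
        omega
      have hNne : {u | c u < 0}.Nonempty := by
        obtain ⟨p, hp⟩ := hPne
        by_contra hcon
        rw [Set.not_nonempty_iff_eq_empty] at hcon
        have hge : ∀ u ∈ Finset.univ, 0 ≤ c u := by
          intro u _
          by_contra hlt
          have : u ∈ {u | c u < 0} := by simp; omega
          simp [hcon] at this
        have := Finset.sum_eq_zero_iff_of_nonneg hge |>.mp hsum p (Finset.mem_univ p)
        simp at hp
        omega
      -- closure properties
      have hmono : ∀ a b, α.toRel a b → c b ≤ c a := by
        intro a b hab
        rcases hc a b hab with ⟨-, h2⟩ | ⟨-, h2⟩ <;> omega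
      obtain ⟨v, hvP, hvsrc⟩ := exists_source_mem α {u | 0 < c u} hPne
        (fun a b hab hb => lt_of_lt_of_le hb (hmono a b hab))
      obtain ⟨w, hwN, hwsnk⟩ := exists_source_mem α.rev {u | c u < 0} hNne
        (fun a b hab hb => lt_of_le_of_lt (hmono b a hab) hb)
      rw [AcyclicOrientation.rev_isSource] at hwsnk
      simp only [Set.mem_setOf_eq] at hvP hwN
      have hvw : v ≠ w := fun h => by rw [h] at hvP; omega
      have hna : ¬ G.Adj v w := by
        intro hadj
        rcases α.rel_total v w hadj with h' | h'
        · rcases hc v w h' with ⟨-, h2⟩ | ⟨-, h2⟩ <;> omega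
        · exact hvsrc w h'
      set β := dflip α v w hvw hna hvsrc hwsnk with hβ
      set c₁ : V → ℤ := fun u => c u - (if u = v then 1 else 0) + (if u = w then 1 else 0)
        with hc₁
      have hβrel : ∀ a b, β.toRel a b ↔
          ((a ≠ v ∧ a ≠ w ∧ b ≠ v ∧ b ≠ w) ∧ α.toRel a b) ∨
          ((a = v ∨ a = w ∨ b = v ∨ b = w) ∧ α.toRel b a) := fun a b => Iff.rfl
      have hcompat : Compat β α'' c₁ := by
        intro a b hab
        rcases (hβrel a b).mp hab with ⟨⟨hav, haw, hbv, hbw⟩, h⟩ | ⟨htouch, h⟩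
        · rcases hc a b h with ⟨h1, h2⟩ | ⟨h1, h2⟩
          · refine Or.inl ⟨h1, ?_⟩
            show c a - _ + _ = c b - _ + _
            simp [hav, haw, hbv, hbw]; omega
          · refine Or.inr ⟨h1, ?_⟩
            show c a - _ + _ = c b - _ + _ + 1
            simp [hav, haw, hbv, hbw]; omega
        · -- h : α.toRel b a; possibilities: a = w or b = v
          have hGba : G.Adj b a := α.adj_of_rel _ _ h
          have haw_or : a = w ∨ b = v := by
            rcases htouch with rfl | rfl | rfl | rfl
            · exact absurd h (hvsrc b)
            · exact Or.inl rfl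
            · exact Or.inr rfl
            · exact absurd h (hwsnk a)
          rcases haw_or with rfl | rfl
          · -- a = w, b not v (else adjacency v w), b ≠ w
            have hbv : b ≠ v := fun h' => hna (h' ▸ hGba)
            have hbw : b ≠ a := hGba.ne
            have hav : a ≠ v := fun h' => hvw h'.symm
            rcases hc b a h with ⟨h1, h2⟩ | ⟨h1, h2⟩
            · refine Or.inr ⟨h1, ?_⟩
              show c a - _ + _ = c b - _ + _ + 1
              simp [hbv, hbw, hav]; omega
            · refine Or.inl ⟨h1, ?_⟩
              show c a - _ + _ = c b - _ + _
              simp [hbv, hbw, hav]; omega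
          · -- b = v, a not w, a ≠ v
            have haw : a ≠ w := fun h' => hna (h' ▸ hGba)
            have hav : a ≠ b := hGba.ne.symm
            have hbw : b ≠ w := hvw
            rcases hc b a h with ⟨h1, h2⟩ | ⟨h1, h2⟩
            · refine Or.inr ⟨h1, ?_⟩
              show c a - _ + _ = c b - _ + _ + 1
              simp [haw, hav, hbw]; omega
            · refine Or.inl ⟨h1, ?_⟩
              show c a - _ + _ = c b - _ + _
              simp [haw, hav, hbw]; omega
      have hsum₁ : ∑ u, c₁ u = 0 := by
        simp only [hc₁]
        rw [Finset.sum_add_distrib, Finset.sum_sub_distrib]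
        simp [Finset.sum_ite_eq', hsum]
      have hcount : ∑ u, (c₁ u).toNat = N - 1 := by
        have key : ∀ u, ((c u).toNat : ℤ) - ((c₁ u).toNat : ℤ) = if u = v then 1 else 0 := by
          intro u
          by_cases huv : u = v
          · subst huv
            simp only [hc₁, if_pos rfl, if_neg hvw]
            simp
            omega
          · by_cases huw : u = w
            · subst huw
              simp only [hc₁, if_neg huv, if_pos rfl]
              simp
              omega
            · simp [hc₁, huv, huw]
        have hz : (∑ u, ((c u).toNat : ℤ)) - (∑ u, ((c₁ u).toNat : ℤ)) = 1 := by
          rw [← Finset.sum_sub_distrib]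
          rw [Finset.sum_congr rfl (fun u _ => key u)]
          simp [Finset.sum_ite_eq']
        have : (N : ℤ) - (∑ u, ((c₁ u).toNat : ℤ)) = 1 := by
          rw [← hz, ← hN]; push_cast; ring
        have h2 : ((∑ u, (c₁ u).toNat : ℕ) : ℤ) = (N : ℤ) - 1 := by push_cast; omega
        omega
      have hflip : IsDoubleFlip α β := isDoubleFlip_dflip α v w hvw hna hvsrc hwsnk
      have hreach := IH (N - 1) (by omega) β c₁ hcompat hsum₁ hcount
      have := (ReachableIn.head hflip hreach)
      have hNeq : N - 1 + 1 = N := by omega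
      rwa [hNeq] at this

lemma walk_abs_le {c : V → ℤ} (hadj : ∀ x y, G.Adj x y → |c x - c y| ≤ 1) :
    ∀ {a b : V} (p : G.Walk a b), |c a - c b| ≤ p.length := by
  intro a b p
  induction p with
  | nil => simp
  | cons hxy p ih =>
    rename_i x y z
    have h1 := hadj x y hxy
    calc |c x - c z| ≤ |c x - c y| + |c y - c z| := by
          have := abs_sub_abs_le_abs_sub (c x - c y) (c z - c y)
          have := abs_add_le (c x - c y) (c y - c z)
          calc |c x - c z| = |(c x - c y) + (c y - c z)| := by ring_nf
            _ ≤ |c x - c y| + |c y - c z| := abs_add_le _ _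
      _ ≤ 1 + p.length := add_le_add h1 ih
      _ = (Walk.cons hxy p).length := by simp [Walk.length_cons]; ring

lemma reachable_abs_le [Fintype V] {c : V → ℤ} (hadj : ∀ x y, G.Adj x y → |c x - c y| ≤ 1)
    {a b : V} (h : G.Reachable a b) : |c a - c b| ≤ (Fintype.card V : ℤ) - 1 := by
  classical
  obtain ⟨p⟩ := h
  have h1 := walk_abs_le hadj (p.toPath : G.Walk a b)
  have h2 : (p.toPath : G.Walk a b).length < Fintype.card V := p.toPath.2.length_lt
  have h3 : ((p.toPath : G.Walk a b).length : ℤ) < (Fintype.card V : ℤ) := by exact_mod_cast h2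
  omega

lemma bezout_finset {κ : Type*} [DecidableEq κ] (n : κ → ℕ) (s : Finset κ) :
    ∃ z : κ → ℤ, ∑ C ∈ s, z C * (n C : ℤ) = ((s.gcd n : ℕ) : ℤ) := by
  induction s using Finset.induction_on with
  | empty => exact ⟨fun _ => 0, by simp⟩
  | insert a s hnotmem ih =>
    obtain ⟨z, hz⟩ := ih
    set A : ℤ := Int.gcdA ((n a : ℕ) : ℤ) ((s.gcd n : ℕ) : ℤ) with hA
    set B : ℤ := Int.gcdB ((n a : ℕ) : ℤ) ((s.gcd n : ℕ) : ℤ) with hB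
    have hgcd : (((insert a s).gcd n : ℕ) : ℤ) = (n a : ℤ) * A + ((s.gcd n : ℕ) : ℤ) * B := by
      rw [Finset.gcd_insert]
      rw [show (GCDMonoid.gcd (n a) (s.gcd n) : ℕ) = Nat.gcd (n a) (s.gcd n) from rfl]
      have h := Int.gcd_eq_gcd_ab ((n a : ℕ) : ℤ) ((s.gcd n : ℕ) : ℤ)
      rwa [Int.gcd_natCast_natCast] at h
    refine ⟨fun C => if C = a then A else B * z C, ?_⟩
    rw [Finset.sum_insert hnotmem]
    beta_reduce
    rw [if_pos rfl]
    have hsum : ∑ C ∈ s, (if C = a then A else B * z C) * (n C : ℤ)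
        = B * ∑ C ∈ s, z C * (n C : ℤ) := by
      rw [Finset.mul_sum]
      refine Finset.sum_congr rfl fun C hC => ?_
      rw [if_neg (by rintro rfl; exact hnotmem hC)]
      ring
    rw [hsum, hz, hgcd]
    ring

end Aux

set_option maxHeartbeats 1000000 in
/-- Let `G` be a finite simple graph on `n` vertices whose connected
components have jointly coprime sizes. If `α` and `α''` are double-flip equivalent acyclic
orientations of `G`, then `α''` can be reached from `α` by at most `2n²` double-flips. -/
theorem doubleFlipEquiv_reachableIn_of_coprime {V : Type*} [Fintype V] (G : SimpleGraph V)
    (hgcd : ∀ d : ℕ, (∀ C : G.ConnectedComponent, d ∣ C.supp.ncard) → d = 1)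
    (α α'' : AcyclicOrientation G) (h : DoubleFlipEquiv α α'') :
    ReachableIn IsDoubleFlip (2 * Fintype.card V ^ 2) α α'' := by
  classical
  haveI : Finite G.ConnectedComponent := Quot.finite _
  haveI : Fintype G.ConnectedComponent := Fintype.ofFinite _
  rcases isEmpty_or_nonempty V with hV | hV
  · refine absurd (hgcd 0 fun C => ?_) (by norm_num)
    obtain ⟨v, -⟩ := C.exists_rep
    exact isEmptyElim v
  obtain ⟨c, hc, hsum⟩ := exists_compat h
  set n : ℕ := Fintype.card V with hn
  set mk : V → G.ConnectedComponent := G.connectedComponentMk with hmk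
  set nn : G.ConnectedComponent → ℕ := fun C => C.supp.ncard with hnn
  have hfiber_card : ∀ C, nn C = (Finset.univ.filter (fun v => mk v = C)).card := by
    intro C
    show C.supp.ncard = _
    rw [show C.supp = {v | mk v = C} from rfl]
    rw [Set.ncard_eq_toFinset_card', Set.toFinset_setOf]
  have hntotal : ∑ C, nn C = n := by
    rw [hn, ← Finset.card_univ,
      Finset.card_eq_sum_card_fiberwise (f := mk) (t := Finset.univ) (fun x _ => Finset.mem_univ _)]
    exact Finset.sum_congr rfl fun C _ => hfiber_card C
  have hfiber : ∀ f : G.ConnectedComponent → ℤ, ∑ u, f (mk u) = ∑ C, (nn C : ℤ) * f C := by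
    intro f
    rw [← Finset.sum_fiberwise_of_maps_to (g := mk) (t := Finset.univ)
      (fun x _ => Finset.mem_univ _) (fun u => f (mk u))]
    refine Finset.sum_congr rfl fun C _ => ?_
    rw [Finset.sum_congr rfl (fun u hu => by rw [(Finset.mem_filter.mp hu).2]),
      Finset.sum_const, hfiber_card C, nsmul_eq_mul]
  -- gcd and Bezout
  have hgcd1 : Finset.univ.gcd nn = 1 := hgcd _ (fun C => Finset.gcd_dvd (Finset.mem_univ C))
  obtain ⟨z, hz⟩ := bezout_finset nn Finset.univ
  rw [hgcd1] at hz
  -- representatives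
  have hrepex : ∀ C : G.ConnectedComponent, ∃ v, mk v = C := fun C => C.exists_rep
  choose rep hrep using hrepex
  set x : G.ConnectedComponent → ℤ := fun C => c (rep C) with hx
  have hadj1 : ∀ a b, G.Adj a b → |c a - c b| ≤ 1 := by
    intro a b hab
    rcases α.rel_total a b hab with h' | h'
    · rcases hc a b h' with ⟨-, h2⟩ | ⟨-, h2⟩ <;> (rw [abs_le]; omega)
    · rcases hc b a h' with ⟨-, h2⟩ | ⟨-, h2⟩ <;> (rw [abs_le]; omega)
  have hoff : ∀ u, |c u - x (mk u)| ≤ (n : ℤ) - 1 := by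
    intro u
    exact reachable_abs_le hadj1 (ConnectedComponent.exact (hrep (mk u)).symm)
  set S : ℤ := ∑ C, (nn C : ℤ) * x C with hS
  have hSbound : |S| ≤ (n : ℤ) * ((n : ℤ) - 1) := by
    have h1 : S = ∑ u, (x (mk u) - c u) := by
      rw [Finset.sum_sub_distrib, hsum, sub_zero, hS, hfiber x]
    rw [h1]
    calc |∑ u, (x (mk u) - c u)| ≤ ∑ u, |x (mk u) - c u| := Finset.abs_sum_le_sum_abs _ _
      _ ≤ ∑ _u : V, ((n : ℤ) - 1) :=
          Finset.sum_le_sum fun u _ => by rw [abs_sub_comm]; exact hoff u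
      _ = (n : ℤ) * ((n : ℤ) - 1) := by
          rw [Finset.sum_const, nsmul_eq_mul, Finset.card_univ, hn]
  -- distinguished component
  set C₀ : G.ConnectedComponent := mk (Classical.arbitrary V) with hC₀
  set n₀ : ℕ := nn C₀ with hn₀
  have hn₀pos : 0 < n₀ := by
    rw [hn₀, hfiber_card]
    exact Finset.card_pos.mpr ⟨rep C₀, by simp [hrep]⟩
  have hn₀le : n₀ ≤ n := by
    rw [← hntotal, hn₀]
    exact Finset.single_le_sum (fun C _ => Nat.zero_le _) (Finset.mem_univ C₀)
  have hn₀z : ((n₀ : ℕ) : ℤ) ≠ 0 := by exact_mod_cast hn₀pos.ne'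
  have hnnle : ∀ C, nn C ≤ n := fun C => by
    rw [← hntotal]; exact Finset.single_le_sum (fun C _ => Nat.zero_le _) (Finset.mem_univ C)
  set A : ℤ := ∑ C ∈ Finset.univ.erase C₀, (S * z C % (n₀ : ℤ)) * (nn C : ℤ) with hA
  have hA0 : 0 ≤ A :=
    Finset.sum_nonneg fun C _ => mul_nonneg (Int.emod_nonneg _ hn₀z) (Int.natCast_nonneg _)
  have hAle : A ≤ (n : ℤ) * (n : ℤ) := by
    calc A ≤ ∑ C ∈ Finset.univ.erase C₀, ((n : ℤ) - 1) * (nn C : ℤ) := by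
          refine Finset.sum_le_sum fun C _ => ?_
          refine mul_le_mul_of_nonneg_right ?_ (Int.natCast_nonneg _)
          have h1 := Int.emod_lt_of_pos (S * z C) (b := ((n₀ : ℕ) : ℤ)) (by exact_mod_cast hn₀pos)
          have h2 : ((n₀ : ℕ) : ℤ) ≤ (n : ℤ) := by exact_mod_cast hn₀le
          linarith
      _ ≤ ∑ C : G.ConnectedComponent, ((n : ℤ) - 1) * (nn C : ℤ) := by
          refine Finset.sum_le_sum_of_subset_of_nonneg (Finset.erase_subset _ _) ?_
          intro C _ _
          have h5 : (1 : ℤ) ≤ (n : ℤ) := by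
            have : 1 ≤ n := hn₀pos.trans_le hn₀le
            exact_mod_cast this
          exact mul_nonneg (by omega) (Int.natCast_nonneg _)
      _ = ((n : ℤ) - 1) * (n : ℤ) := by
          rw [← Finset.mul_sum]
          congr 1
          rw [← Nat.cast_sum, hntotal]
      _ ≤ (n : ℤ) * (n : ℤ) := by nlinarith [Int.natCast_nonneg n]
  -- S as a combination
  have hSsum : ∑ C, S * z C * (nn C : ℤ) = S := by
    rw [Finset.sum_congr rfl fun C _ => mul_assoc S (z C) ((nn C : ℕ) : ℤ),
      ← Finset.mul_sum, hz]
    simp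
  have hdvd : ((n₀ : ℕ) : ℤ) ∣ (S - A) := by
    have hsplit : S - A = S * z C₀ * ((n₀ : ℕ) : ℤ)
        + ∑ C ∈ Finset.univ.erase C₀, (S * z C - S * z C % ((n₀ : ℕ) : ℤ)) * (nn C : ℤ) := by
      have e1 : ∑ C ∈ Finset.univ.erase C₀, (S * z C - S * z C % ((n₀:ℕ):ℤ)) * (nn C : ℤ)
          = (∑ C ∈ Finset.univ.erase C₀, S * z C * (nn C : ℤ)) - A := by
        rw [hA, ← Finset.sum_sub_distrib]
        exact Finset.sum_congr rfl fun C _ => by ring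
      have e2 : ∑ C : G.ConnectedComponent, S * z C * ((nn C : ℕ) : ℤ)
          = S * z C₀ * ((nn C₀ : ℕ) : ℤ)
            + ∑ C ∈ Finset.univ.erase C₀, S * z C * ((nn C : ℕ) : ℤ) :=
        (Finset.add_sum_erase _ _ (Finset.mem_univ C₀)).symm
      rw [e1, hn₀]
      calc S - A = ∑ C : G.ConnectedComponent, S * z C * ((nn C:ℕ) : ℤ) - A := by rw [hSsum]
        _ = S * z C₀ * ((nn C₀ : ℕ) : ℤ)
            + (∑ C ∈ Finset.univ.erase C₀, S * z C * ((nn C : ℕ) : ℤ) - A) := by rw [e2]; ring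
    rw [hsplit]
    refine dvd_add ⟨S * z C₀, by ring⟩ (Finset.dvd_sum fun C _ => ?_)
    refine Dvd.dvd.mul_right ⟨S * z C / (n₀ : ℤ), ?_⟩ _
    rw [Int.emod_def]
    ring
  set q : ℤ := (S - A) / ((n₀ : ℕ) : ℤ) with hq
  have hqmul : q * ((n₀ : ℕ) : ℤ) = S - A := Int.ediv_mul_cancel hdvd
  set y : G.ConnectedComponent → ℤ := fun C => if C = C₀ then q else S * z C % ((n₀ : ℕ) : ℤ)
    with hy
  have hysum : ∑ C, y C * (nn C : ℤ) = S := by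
    rw [← Finset.add_sum_erase _ _ (Finset.mem_univ C₀)]
    have h1 : y C₀ * (nn C₀ : ℤ) = S - A := by
      rw [hy]; beta_reduce; rw [if_pos rfl, ← hn₀]; exact hqmul
    have h2 : ∑ C ∈ Finset.univ.erase C₀, y C * (nn C : ℤ) = A := by
      rw [hA]
      refine Finset.sum_congr rfl fun C hC => ?_
      rw [hy]; beta_reduce
      rw [if_neg (Finset.ne_of_mem_erase hC)]
    rw [h1, h2]
    ring
  have hyb : ∀ C ∈ Finset.univ.erase C₀, 0 ≤ y C ∧ y C ≤ (n : ℤ) - 1 := by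
    intro C hC
    rw [hy]; beta_reduce
    rw [if_neg (Finset.ne_of_mem_erase hC)]
    have h1 := Int.emod_lt_of_pos (S * z C) (b := ((n₀:ℕ) : ℤ)) (by exact_mod_cast hn₀pos)
    have h2 := Int.emod_nonneg (S * z C) hn₀z
    have h3 : ((n₀ : ℕ) : ℤ) ≤ (n : ℤ) := by exact_mod_cast hn₀le
    constructor <;> linarith
  have hqbound : (nn C₀ : ℤ) * |q| ≤ 2 * (n : ℤ) * (n : ℤ) := by
    have h1 : |q * ((n₀:ℕ) : ℤ)| = |q| * ((n₀:ℕ) : ℤ) := by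
      rw [abs_mul, abs_of_nonneg (Int.natCast_nonneg _)]
    have h2 : |S - A| ≤ 2 * (n : ℤ) * (n : ℤ) := by
      have h3 : |S - A| ≤ |S| + |A| := abs_sub _ _
      have h4 : |A| = A := abs_of_nonneg hA0
      nlinarith [Int.natCast_nonneg n]
    rw [← hn₀, mul_comm]
    calc |q| * ((n₀ : ℕ) : ℤ) = |S - A| := by rw [← h1, hqmul]
      _ ≤ 2 * (n : ℤ) * (n : ℤ) := h2
  -- the shifted count vector
  set d : V → ℤ := fun u => y (mk u) - x (mk u) with hd
  have hdconst : ∀ a b, G.Adj a b → d a = d b := by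
    intro a b hab
    have : mk a = mk b := ConnectedComponent.sound hab.reachable
    rw [hd]; beta_reduce; rw [this]
  set c' : V → ℤ := fun u => c u + d u with hc'def
  have hc' : Compat α α'' c' := compat_shift hc d hdconst
  have hsum' : ∑ u, c' u = 0 := by
    rw [hc'def]
    rw [Finset.sum_add_distrib, hsum, zero_add, hd]
    rw [Finset.sum_sub_distrib]
    rw [hfiber y, hfiber x, ← hS]
    have : ∑ C, (nn C : ℤ) * y C = S := by
      rw [← hysum]; exact Finset.sum_congr rfl fun C _ => mul_comm _ _
    rw [this]
    ring
  -- the size bound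
  have hyabs : ∑ C, (nn C : ℤ) * |y C| ≤ 3 * (n:ℤ) * (n:ℤ) := by
    rw [← Finset.add_sum_erase _ _ (Finset.mem_univ C₀)]
    have h1 : ∑ C ∈ Finset.univ.erase C₀, (nn C : ℤ) * |y C| ≤ (n:ℤ) * (n:ℤ) := by
      calc ∑ C ∈ Finset.univ.erase C₀, (nn C : ℤ) * |y C|
          ≤ ∑ C ∈ Finset.univ.erase C₀, (nn C : ℤ) * ((n:ℤ) - 1) := by
            refine Finset.sum_le_sum fun C hC => ?_
            refine mul_le_mul_of_nonneg_left ?_ (Int.natCast_nonneg _)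
            obtain ⟨hy0, hy1⟩ := hyb C hC
            rw [abs_of_nonneg hy0]; exact hy1
        _ ≤ ∑ C : G.ConnectedComponent, (nn C : ℤ) * ((n:ℤ) - 1) := by
            refine Finset.sum_le_sum_of_subset_of_nonneg (Finset.erase_subset _ _) ?_
            intro C _ _
            have h5 : 1 ≤ n := hn₀pos.trans_le hn₀le
            have h6 : (1:ℤ) ≤ (n:ℤ) := by exact_mod_cast h5
            exact mul_nonneg (Int.natCast_nonneg _) (by omega)
        _ = (n:ℤ) * ((n:ℤ) - 1) := by
            rw [← Finset.sum_mul, ← Nat.cast_sum, hntotal]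
        _ ≤ (n:ℤ) * (n:ℤ) := by nlinarith [Int.natCast_nonneg n]
    have h2 : (nn C₀ : ℤ) * |y C₀| ≤ 2 * (n:ℤ) * (n:ℤ) := by
      have : y C₀ = q := by rw [hy]; beta_reduce; rw [if_pos rfl]
      rw [this]; exact hqbound
    linarith
  have hbound : ∑ u, (c' u).toNat ≤ 2 * n ^ 2 := by
    have hpt : ∀ u, 2 * ((c' u).toNat : ℤ) = ((c' u).natAbs : ℤ) + c' u := fun u => by omega
    have h2 : 2 * ∑ u, ((c' u).toNat : ℤ) = ∑ u, ((c' u).natAbs : ℤ) := by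
      rw [Finset.mul_sum, Finset.sum_congr rfl (fun u _ => hpt u), Finset.sum_add_distrib,
        hsum', add_zero]
    have habs : ∑ u, ((c' u).natAbs : ℤ) ≤ 4 * (n:ℤ) * (n:ℤ) := by
      have e3 : ∀ u : V, ((c' u).natAbs : ℤ) = |c' u| := fun u => (Int.abs_eq_natAbs _).symm
      rw [Finset.sum_congr rfl fun u _ => e3 u]
      have tri : ∀ u : V, |c' u| ≤ |c u - x (mk u)| + |y (mk u)| := by
        intro u
        have : c' u = (c u - x (mk u)) + y (mk u) := by rw [hc'def, hd]; ring
        rw [this]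
        exact abs_add_le _ _
      calc ∑ u, |c' u| ≤ ∑ u, (|c u - x (mk u)| + |y (mk u)|) := Finset.sum_le_sum fun u _ => tri u
        _ = ∑ u, |c u - x (mk u)| + ∑ u, |y (mk u)| := Finset.sum_add_distrib
        _ ≤ (n:ℤ) * ((n:ℤ) - 1) + 3 * (n:ℤ) * (n:ℤ) := by
            have b1 : ∑ u, |c u - x (mk u)| ≤ (n:ℤ) * ((n:ℤ)-1) := by
              calc ∑ u, |c u - x (mk u)| ≤ ∑ _u : V, ((n:ℤ) - 1) :=
                    Finset.sum_le_sum fun u _ => hoff u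
                _ = (n:ℤ) * ((n:ℤ)-1) := by
                    rw [Finset.sum_const, nsmul_eq_mul, Finset.card_univ, hn]
            have b2 : ∑ u, |y (mk u)| ≤ 3 * (n:ℤ) * (n:ℤ) := by
              rw [hfiber (fun C => |y C|)]
              exact hyabs
            linarith
        _ ≤ 4 * (n:ℤ) * (n:ℤ) := by nlinarith [Int.natCast_nonneg n]
    -- conclude
    have h7 : 2 * ∑ u, ((c' u).toNat : ℤ) ≤ 4 * (n:ℤ) * (n:ℤ) := by rw [h2]; exact habs
    have h8 : ∑ u, ((c' u).toNat : ℤ) ≤ 2 * (n:ℤ) * (n:ℤ) := by linarith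
    have h9 : ((∑ u, (c' u).toNat : ℕ) : ℤ) = ∑ u, ((c' u).toNat : ℤ) := by
      push_cast
      rfl
    have h10 : ((2 * n ^ 2 : ℕ) : ℤ) = 2 * (n:ℤ) * (n:ℤ) := by push_cast; ring
    rw [← Nat.cast_le (α := ℤ), h9, h10]
    exact h8
  have hreach := realize α'' (∑ u, (c' u).toNat) α c' hc' hsum' rfl
  exact hreach.mono hbound

-- #print axioms doubleFlipEquiv_reachableIn_of_coprime
end

section
/- Let G be a finite simple graph on vertex set {1,…,n}, let α be an acyclic orientation of G, and let σ be a linear extension of the poset P_α. Then performing inflips successively at the vertices σ(1), σ(2), …, σ(n) is well-defined (at each step the vertex to be inflipped is a source of the current acyclic orientation) and the resulting acyclic orientation after these n inflips is again α. -/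
open SimpleGraph

/-- `α'` is obtained from `α` by an inflip at `v`: the source `v` is converted into a sink by
reversing the directions of all its incident edges. -/
def IsInflipAt {V : Type*} {G : SimpleGraph V} (v : V) (α α' : AcyclicOrientation G) : Prop :=
  α.IsSource v ∧
    ∀ a b, (α'.toRel a b ↔ (a ≠ v ∧ b ≠ v ∧ α.toRel a b) ∨ (b = v ∧ α.toRel b a))

/-- `α'` is obtained from `α` by an outflip at `v`: the sink `v` is converted into a source by
reversing the directions of all its incident edges. -/
def IsOutflipAt {V : Type*} {G : SimpleGraph V} (v : V) (α α' : AcyclicOrientation G) : Prop :=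
  α.IsSink v ∧
    ∀ a b, (α'.toRel a b ↔ (a ≠ v ∧ b ≠ v ∧ α.toRel a b) ∨ (a = v ∧ α.toRel b a))

/-- `α'` is obtained from `α` by an inflip (at some source). -/
def IsInflip {V : Type*} {G : SimpleGraph V} (α α' : AcyclicOrientation G) : Prop :=
  ∃ v, IsInflipAt v α α'

/-- `α'` is obtained from `α` by an outflip (at some sink). -/
def IsOutflip {V : Type*} {G : SimpleGraph V} (α α' : AcyclicOrientation G) : Prop :=
  ∃ v, IsOutflipAt v α α'

/-- A flip is an inflip or an outflip. -/
def IsFlip {V : Type*} {G : SimpleGraph V} (α α' : AcyclicOrientation G) : Prop :=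
  IsInflip α α' ∨ IsOutflip α α'

/-- Flip equivalence: `α ∼ α'` iff one can be obtained from the other by a sequence of flips. -/
def FlipEquiv {V : Type*} {G : SimpleGraph V} (α α' : AcyclicOrientation G) : Prop :=
  Relation.ReflTransGen IsFlip α α'

/-!
Rank the vertices by their position `σ⁻¹` in the linear extension, and orient every edge
towards the larger rank; this recovers `α`. After the first `k` inflips, the orientation is the
one induced by the rank in which the `k` vertices already inflipped are moved above all others
(keeping their relative order). Each inflip then moves the current minimum, a source, to the
top, where it becomes a sink, and after `n` steps all ranks have been shifted by `n`.
-/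

namespace AcyclicOrientation

variable {V β : Type*} {G : SimpleGraph V}

theorem ext {α α' : AcyclicOrientation G} (h : α.toRel = α'.toRel) : α = α' := by
  cases α; cases α'; cases h; rfl

def ofRank [LinearOrder β] (G : SimpleGraph V) (g : V → β) (hg : Function.Injective g) :
    AcyclicOrientation G where
  toRel a b := G.Adj a b ∧ g a < g b
  adj_of_rel _ _ h := h.1
  rel_total a b h := (lt_or_gt_of_ne (hg.ne (G.ne_of_adj h))).imp (⟨h, ·⟩) (⟨h.symm, ·⟩)
  asymm _ _ h h' := lt_asymm h.2 h'.2
  acyclic v hv := by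
    have mono : ∀ a b, Relation.TransGen (fun a b => G.Adj a b ∧ g a < g b) a b → g a < g b :=
      fun a b h => Relation.TransGen.trans_induction_on h (fun h => h.2) (fun _ _ => lt_trans)
    exact lt_irrefl _ (mono v v hv)

theorem lt_of_toRel [PartialOrder β] (α : AcyclicOrientation G) {g : V → β}
    (hg : Function.Injective g) (hle : ∀ a b, α.toRel a b → g a ≤ g b) {a b : V}
    (hab : α.toRel a b) : g a < g b :=
  (hle a b hab).lt_of_ne fun e => α.asymm a b hab (hg e ▸ hab)

theorem ofRank_eq [LinearOrder β] (α : AcyclicOrientation G) {g : V → β}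
    (hg : Function.Injective g) (hlt : ∀ a b, α.toRel a b → g a < g b) :
    ofRank G g hg = α := by
  refine ext (funext fun a => funext fun b => propext ⟨fun ⟨hadj, hab⟩ => ?_, fun h =>
    ⟨α.adj_of_rel a b h, hlt a b h⟩⟩)
  exact (α.rel_total a b hadj).resolve_right fun hba => lt_asymm hab (hlt b a hba)

theorem isInflipAt_ofRank [LinearOrder β] {g g' : V → β} (hg : Function.Injective g)
    (hg' : Function.Injective g') {v : V} (hmin : ∀ u ≠ v, g v < g u)
    (hmax : ∀ u ≠ v, g' u < g' v) (heq : ∀ u ≠ v, g' u = g u) :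
    IsInflipAt v (ofRank G g hg) (ofRank G g' hg') := by
  refine ⟨fun u h => (hmin u (G.ne_of_adj h.1)).not_gt h.2, fun a b => ?_⟩
  simp only [ofRank]
  by_cases ha : a = v <;> by_cases hb : b = v
  · subst ha hb; simp
  · subst ha; simp [hb, (hmax b hb).le]
  · subst hb; simp [ha, hmax a ha, hmin a ha, G.adj_comm]
  · simp [ha, hb, heq a ha, heq b hb]

end AcyclicOrientation

open AcyclicOrientation

def shiftedRank {n : ℕ} (σ : Equiv.Perm (Fin n)) (k : ℕ) (x : Fin n) : ℕ :=
  if (σ.symm x : ℕ) < k then σ.symm x + n else σ.symm x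

theorem shiftedRank_injective {n : ℕ} (σ : Equiv.Perm (Fin n)) (k : ℕ) :
    Function.Injective (shiftedRank σ k) := by
  intro x y h
  have hx := (σ.symm x).is_lt
  have hy := (σ.symm y).is_lt
  refine σ.symm.injective (Fin.ext ?_)
  unfold shiftedRank at h
  split_ifs at h <;> omega

theorem isInflipAt_ofRank_shiftedRank {n : ℕ} (G : SimpleGraph (Fin n))
    (σ : Equiv.Perm (Fin n)) (i : Fin n) :
    IsInflipAt (σ i) (ofRank G (shiftedRank σ i) (shiftedRank_injective σ i))
      (ofRank G (shiftedRank σ (i + 1)) (shiftedRank_injective σ (i + 1))) := by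
  have hne (u : Fin n) (hu : u ≠ σ i) : (σ.symm u : ℕ) ≠ i := fun h =>
    hu (σ.symm_apply_eq.mp (Fin.ext h))
  refine isInflipAt_ofRank _ _ (fun u hu => ?_) (fun u hu => ?_) (fun u hu => ?_) <;>
  · have := hne u hu
    have := (σ.symm u).is_lt
    simp only [shiftedRank, Equiv.symm_apply_apply]
    split_ifs <;> omega

/-- If `σ` is a linear extension of the poset `P_α` of an acyclic orientation
`α` of a graph `G` on `{1, …, n}`, then performing inflips successively at
`σ 0, σ 1, …, σ (n - 1)` is well-defined (at each step the vertex to be inflipped is a source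
of the current orientation) and the resulting acyclic orientation after these `n` inflips is
again `α`. -/
theorem inflips_along_linear_extension (n : ℕ) (G : SimpleGraph (Fin n))
    (α : AcyclicOrientation G) (σ : Equiv.Perm (Fin n))
    (hσ : ∀ i j : Fin n, Relation.ReflTransGen α.toRel i j → σ.symm i ≤ σ.symm j) :
    ∃ f : ℕ → AcyclicOrientation G, f 0 = α ∧ f n = α ∧
      ∀ i : Fin n, IsInflipAt (σ i) (f i.val) (f (i.val + 1)) := by
  have hlt a b (h : α.toRel a b) : (σ.symm a : ℕ) < σ.symm b :=
    α.lt_of_toRel σ.symm.injective (fun a b h => hσ a b (.single h)) h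
  have bound (x : Fin n) : (σ.symm x : ℕ) < n := (σ.symm x).is_lt
  refine ⟨fun k => ofRank G (shiftedRank σ k) (shiftedRank_injective σ k), ?_, ?_,
    isInflipAt_ofRank_shiftedRank G σ⟩
  · exact α.ofRank_eq _ fun a b h => by simp [shiftedRank, hlt a b h]
  · exact α.ofRank_eq _ fun a b h => by simp [shiftedRank, bound, hlt a b h]
end

section
/- For every n ≥ 3, every connected component of the friends-and-strangers graph FS(Cycle_n, Star_n) is isomorphic to the cycle graph Cycle_{n(n−1)} on n(n−1) vertices. -/
open SimpleGraph

/-- Adjacency in the friends-and-strangers graph: bijections `σ` and `τ` are adjacent iff there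
is an edge `{a, b}` of `X` such that `{σ a, σ b}` is an edge of `Y`, `σ a = τ b`, `σ b = τ a`,
and `σ c = τ c` for every vertex `c` other than `a` and `b`. -/
def fsAdj {α β : Type*} (X : SimpleGraph α) (Y : SimpleGraph β) (σ τ : α ≃ β) : Prop :=
  ∃ a b : α, X.Adj a b ∧ Y.Adj (σ a) (σ b) ∧ σ a = τ b ∧ σ b = τ a ∧
    ∀ c : α, c ≠ a → c ≠ b → σ c = τ c

/-- The friends-and-strangers graph `FS(X, Y)` of two simple graphs on the same number of
vertices; its vertices are bijections from `V(X)` to `V(Y)`. -/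
def FS {α β : Type*} (X : SimpleGraph α) (Y : SimpleGraph β) : SimpleGraph (α ≃ β) where
  Adj := fsAdj X Y
  symm := by
    constructor
    rintro σ τ ⟨a, b, hX, hY, h1, h2, h3⟩
    refine ⟨a, b, hX, ?_, h2.symm, h1.symm, fun c hca hcb => (h3 c hca hcb).symm⟩
    rw [← h2, ← h1]
    exact hY.symm
  loopless := by
    constructor
    rintro σ ⟨a, b, hX, hY, h1, _, _⟩
    exact hX.ne (σ.injective h1)

/-- The star graph on `Fin n`: the vertex `0` is adjacent to every other vertex, and there are
no other edges. -/
def StarG (n : ℕ) : SimpleGraph (Fin n) :=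
  SimpleGraph.fromRel (fun a _ => a.val = 0)

/-!
In `FS(Cycle_n, Star_n)` a move must swap the centre of the star, sitting at the cycle vertex
`hole σ`, with one of its two cycle neighbours. So every `σ` has exactly the two neighbours
`slide σ` (the hole moves forward) and `slide⁻¹ σ`, and each component is an orbit of `slide`:
a cycle whose length is the minimal period of `slide`. Read from the hole, `slide` acts by the
fixed permutation `rotateNonzero`, an `(n - 1)`-cycle on the nonzero vertices, while the hole
advances by one; hence `slide^[k] σ = σ` iff `n ∣ k` and `n - 1 ∣ k`, i.e. iff `n (n - 1) ∣ k`.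
-/

open Function

namespace SimpleGraph

variable {V : Type*} {G : SimpleGraph V} {f : V → V} {m : ℕ}

lemma reachable_iterate (hf : ∀ v, G.Adj v (f v)) (v : V) (k : ℕ) :
    G.Reachable v (f^[k] v) := by
  induction k with
  | zero => rfl
  | succ k ih =>
    rw [iterate_succ_apply']
    exact ih.trans (hf _).reachable

lemma exists_iterate_eq_of_reachable (hadj : ∀ u v, G.Adj u v → v = f u ∨ u = f v)
    (hper : ∀ v, minimalPeriod f v = m) (hm : 0 < m) {u v : V} (h : G.Reachable u v) :
    ∃ k, f^[k] u = v := by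
  obtain ⟨w⟩ := h
  induction w with
  | nil => exact ⟨0, rfl⟩
  | @cons u x v hux _ ih =>
    obtain ⟨k, rfl⟩ := ih
    rcases hadj u x hux with rfl | rfl
    · exact ⟨k + 1, rfl⟩
    · refine ⟨k + (m - 1), ?_⟩
      rw [iterate_add_apply, ← iterate_succ_apply, Nat.succ_eq_add_one, Nat.sub_add_cancel hm,
        ← hper x, iterate_minimalPeriod]

lemma nonempty_induce_supp_iso_cycleGraph (hadj : ∀ u v, G.Adj u v ↔ v = f u ∨ u = f v)
    (hper : ∀ v, minimalPeriod f v = m) (hm : 1 < m) (C : G.ConnectedComponent) :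
    Nonempty (G.induce C.supp ≃g cycleGraph m) := by
  obtain ⟨k, rfl⟩ : ∃ k, m = k + 2 := ⟨m - 2, by omega⟩
  obtain ⟨v₀, rfl⟩ := C.exists_rep
  have iterate_inj {i j : ℕ} (hi : i < k + 2) (hj : j < k + 2) : f^[i] v₀ = f^[j] v₀ ↔ i = j :=
    iterate_eq_iterate_iff_of_lt_minimalPeriod (hper v₀ ▸ hi) (hper v₀ ▸ hj)
  have iterate_mod (j : ℕ) : f^[j % (k + 2)] v₀ = f^[j] v₀ := by
    simpa only [hper v₀] using iterate_mod_minimalPeriod_eq (f := f) (x := v₀) (n := j)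
  let φ : Fin (k + 2) → (G.connectedComponentMk v₀).supp := fun i =>
    ⟨f^[i] v₀, ConnectedComponent.sound
      (reachable_iterate (fun v => (hadj _ _).2 (Or.inl rfl)) v₀ i).symm⟩
  have φ_inj : Injective φ := fun i j h =>
    Fin.ext ((iterate_inj i.2 j.2).1 (congrArg Subtype.val h))
  have φ_surj : Surjective φ := by
    rintro ⟨u, hu⟩
    obtain ⟨j, rfl⟩ := exists_iterate_eq_of_reachable (fun u v => (hadj u v).1) hper (by omega)
      (ConnectedComponent.exact hu.symm)
    exact ⟨⟨j % (k + 2), Nat.mod_lt _ (by omega)⟩, Subtype.ext (iterate_mod j)⟩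
  have succ_iff (i j : Fin (k + 2)) : f^[j] v₀ = f^[i + 1] v₀ ↔ j = i + 1 := by
    rw [← iterate_mod (i + 1), iterate_inj j.2 (Nat.mod_lt _ (by omega)), Fin.ext_iff, Fin.val_add,
      Fin.val_one]
  refine ⟨(Iso.symm ⟨Equiv.ofBijective φ ⟨φ_inj, φ_surj⟩, ?_⟩)⟩
  intro i j
  change G.Adj (f^[i] v₀) (f^[j] v₀) ↔ _
  rw [hadj, ← iterate_succ_apply' f i, ← iterate_succ_apply' f j, succ_iff, succ_iff,
    cycleGraph_adj, sub_eq_iff_eq_add, sub_eq_iff_eq_add, add_comm 1, add_comm 1]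
  exact or_comm

end SimpleGraph

open Equiv

lemma Equiv.Perm.trans_eq_self_iff {α β : Type*} {e : Perm α} {f : α ≃ β} :
    e.trans f = f ↔ e = 1 :=
  ⟨fun h => Equiv.ext fun x => f.injective (Equiv.congr_fun h x), fun h => h ▸ refl_trans f⟩

lemma starG_adj_iff {n : ℕ} [NeZero n] {x y : Fin n} :
    (StarG n).Adj x y ↔ x ≠ y ∧ (x = 0 ∨ y = 0) := by
  rw [StarG, fromRel_adj, Fin.val_eq_zero_iff, Fin.val_eq_zero_iff]

namespace FS

lemma adj_iff_exists_swap {α β : Type*} [DecidableEq α] {X : SimpleGraph α} {Y : SimpleGraph β}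
    {σ τ : α ≃ β} :
    (FS X Y).Adj σ τ ↔ ∃ a b, X.Adj a b ∧ Y.Adj (σ a) (σ b) ∧ τ = (swap a b).trans σ := by
  constructor
  · rintro ⟨a, b, hX, hY, hab, hba, hrest⟩
    refine ⟨a, b, hX, hY, Equiv.ext fun c => ?_⟩
    rcases eq_or_ne c a with rfl | hca
    · simp [hba]
    rcases eq_or_ne c b with rfl | hcb
    · simp [hab]
    · simp [swap_apply_of_ne_of_ne hca hcb, hrest c hca hcb]
  · rintro ⟨a, b, hX, hY, rfl⟩
    exact ⟨a, b, hX, hY, by simp, by simp,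
      fun c hca hcb => by simp [swap_apply_of_ne_of_ne hca hcb]⟩

open Fin.NatCast

variable {n : ℕ}

def hole (σ : Fin (n + 2) ≃ Fin (n + 2)) : Fin (n + 2) := σ.symm 0

def slide (σ : Fin (n + 2) ≃ Fin (n + 2)) : Fin (n + 2) ≃ Fin (n + 2) :=
  (swap (hole σ) (hole σ + 1)).trans σ

def fromHole (σ : Fin (n + 2) ≃ Fin (n + 2)) : Fin (n + 2) ≃ Fin (n + 2) :=
  (Equiv.addLeft (hole σ)).trans σ

def rotateNonzero : Perm (Fin (n + 2)) := swap 0 1 * finRotate (n + 2)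

variable {σ τ : Fin (n + 2) ≃ Fin (n + 2)}

lemma hole_swap_trans (a b : Fin (n + 2)) : hole ((swap a b).trans σ) = swap a b (hole σ) := by
  simp [hole]

lemma hole_slide : hole (slide σ) = hole σ + 1 := by
  rw [slide, hole_swap_trans, swap_apply_left]

lemma eq_slide_iff : σ = slide τ ↔ τ = (swap (hole σ) (hole σ - 1)).trans σ := by
  constructor
  · rintro rfl
    rw [hole_slide, add_sub_cancel_right, swap_comm, slide, ← trans_assoc, swap_swap, refl_trans]
  · intro h
    have hτ : hole τ = hole σ - 1 := by rw [h, hole_swap_trans, swap_apply_left]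
    rw [slide, hτ, sub_add_cancel, h, swap_comm, ← trans_assoc, swap_swap, refl_trans]

lemma adj_iff_slide :
    (FS (cycleGraph (n + 2)) (StarG (n + 2))).Adj σ τ ↔ τ = slide σ ∨ σ = slide τ := by
  have star_adj (a b : Fin (n + 2)) :
      (StarG (n + 2)).Adj (σ a) (σ b) ↔ a ≠ b ∧ (a = hole σ ∨ b = hole σ) := by
    simp only [starG_adj_iff, ne_eq, EmbeddingLike.apply_eq_iff_eq, hole, eq_symm_apply]
  have nbr (b : Fin (n + 2)) :
      (cycleGraph (n + 2)).Adj (hole σ) b ↔ b = hole σ - 1 ∨ b = hole σ + 1 := by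
    rw [← mem_neighborSet, cycleGraph_neighborSet]
    rfl
  have at_hole : (∃ a b, (cycleGraph (n + 2)).Adj a b ∧ (StarG (n + 2)).Adj (σ a) (σ b) ∧
      τ = (swap a b).trans σ) ↔
      ∃ b, (cycleGraph (n + 2)).Adj (hole σ) b ∧ τ = (swap (hole σ) b).trans σ := by
    simp only [star_adj]
    constructor
    · rintro ⟨a, b, hab, ⟨-, rfl | rfl⟩, rfl⟩
      exacts [⟨b, hab, rfl⟩, ⟨a, hab.symm, by rw [swap_comm]⟩]
    · rintro ⟨b, hb, rfl⟩
      exact ⟨_, b, hb, ⟨hb.ne, Or.inl rfl⟩, rfl⟩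
  rw [adj_iff_exists_swap, at_hole, eq_slide_iff (σ := σ), slide]
  simp only [nbr, or_and_right, exists_or, exists_eq_left]
  exact or_comm

lemma hole_iterate_slide (k : ℕ) : hole (slide^[k] σ) = hole σ + k := by
  induction k with
  | zero => simp
  | succ k ih => rw [iterate_succ_apply', hole_slide, ih, Nat.cast_succ, add_assoc]

lemma fromHole_slide : fromHole (slide σ) = rotateNonzero.trans (fromHole σ) := by
  refine Equiv.ext fun x => ?_
  have key := (add_right_injective (hole σ)).swap_apply 0 1 (x + 1)
  simp only [add_zero] at key
  show slide σ (hole (slide σ) + x) = fromHole σ (rotateNonzero x)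
  rw [hole_slide, add_assoc, add_comm 1 x]
  simp only [slide, fromHole, rotateNonzero, trans_apply, coe_addLeft, Perm.mul_apply,
    finRotate_apply, key]

lemma fromHole_iterate_slide (k : ℕ) :
    fromHole (slide^[k] σ) = (rotateNonzero ^ k).trans (fromHole σ) := by
  induction k with
  | zero => rfl
  | succ k ih => rw [iterate_succ_apply', fromHole_slide, ih, pow_succ, Perm.mul_def, trans_assoc]

lemma eq_iff_hole_eq_and_fromHole_eq : σ = τ ↔ hole σ = hole τ ∧ fromHole σ = fromHole τ := by
  refine ⟨fun h => h ▸ ⟨rfl, rfl⟩, fun ⟨h1, h2⟩ => Equiv.ext fun x => ?_⟩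
  have hσ : σ x = fromHole σ (x - hole σ) := by simp [fromHole]
  have hτ : τ x = fromHole τ (x - hole τ) := by simp [fromHole]
  rw [hσ, hτ, h1, h2]

lemma orderOf_rotateNonzero : orderOf (rotateNonzero : Perm (Fin (n + 2))) = n + 1 := by
  cases n with
  | zero => rw [show (rotateNonzero : Perm (Fin 2)) = 1 by decide, orderOf_one]
  | succ n =>
    have h01 : finRotate (n + 3) 0 = 1 := (finRotate_apply 0).trans (zero_add 1)
    have h02 : finRotate (n + 3) (finRotate (n + 3) 0) ≠ 0 := by
      rw [h01, finRotate_apply, Ne, Fin.ext_iff, Fin.val_add, Fin.val_one,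
        Nat.mod_eq_of_lt (by omega)]
      simp
    have hcyc := isCycle_finRotate.swap_mul (x := (0 : Fin (n + 3))) (by simp [h01]) h02
    rw [rotateNonzero, ← h01, hcyc.orderOf, Perm.support_swap_mul_eq _ _ h02, support_finRotate]
    simp [Finset.card_univ_sdiff]

lemma iterate_slide_eq_self_iff (k : ℕ) : slide^[k] σ = σ ↔ (n + 2) * (n + 1) ∣ k := by
  rw [eq_iff_hole_eq_and_fromHole_eq, hole_iterate_slide, fromHole_iterate_slide, add_eq_left,
    Fin.natCast_eq_zero, Perm.trans_eq_self_iff, ← orderOf_dvd_iff_pow_eq_one,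
    orderOf_rotateNonzero]
  exact ⟨fun ⟨h₁, h₂⟩ => Nat.Coprime.mul_dvd_of_dvd_of_dvd
    (Nat.coprime_self_add_left.2 (Nat.coprime_one_left _)) h₁ h₂,
    fun h => ⟨(Nat.dvd_mul_right _ _).trans h, (Nat.dvd_mul_left _ _).trans h⟩⟩

lemma minimalPeriod_slide : minimalPeriod slide σ = (n + 2) * (n + 1) :=
  Nat.dvd_antisymm (isPeriodicPt_iff_minimalPeriod_dvd.1 ((iterate_slide_eq_self_iff _).2 dvd_rfl))
    ((iterate_slide_eq_self_iff _).1 iterate_minimalPeriod)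

end FS

/-- For every `n ≥ 3`, every connected component of `FS(Cycle_n, Star_n)` is
isomorphic to the cycle graph on `n * (n - 1)` vertices. -/
theorem fs_cycle_star_components_iso_cycle (n : ℕ) (hn : 3 ≤ n)
    (C : (FS (cycleGraph n) (StarG n)).ConnectedComponent) :
    Nonempty ((SimpleGraph.induce C.supp (FS (cycleGraph n) (StarG n))) ≃g
      cycleGraph (n * (n - 1))) := by
  obtain ⟨k, rfl⟩ : ∃ k, n = k + 2 := ⟨n - 2, by omega⟩
  exact nonempty_induce_supp_iso_cycleGraph (fun _ _ => FS.adj_iff_slide)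
    (fun _ => FS.minimalPeriod_slide) (by nlinarith) C
end

section
/- There exists an absolute constant C > 0 such that for every n ≥ 3, every simple graph Y on vertex set {1,…,n}, and every pair of bijections σ, τ lying in the same connected component of FS(Cycle_n, Y), there exists an integer k with 0 ≤ k ≤ n−1 such that the cyclic rotation τ_* of τ, defined by τ_*(i) = τ(((i + k − 1) mod n) + 1) for all i ∈ {1,…,n}, lies in the same connected component as σ and satisfies d(σ, τ_*) ≤ C·n³. -/
set_option linter.unusedSectionVars false
set_option maxHeartbeats 1000000


open SimpleGraph

section Core
variable {n : ℕ} [NeZero n]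

/-- token (or position) residue class of an integer -/
def tok (n : ℕ) [NeZero n] (x : ℤ) : Fin n :=
  ⟨(x % (n:ℤ)).toNat, by
    have h0 : (0:ℤ) < (n:ℤ) := by exact_mod_cast Nat.pos_of_ne_zero (NeZero.ne n)
    have h1 : 0 ≤ x % (n:ℤ) := Int.emod_nonneg x (by exact_mod_cast (NeZero.ne n))
    have h2 : x % (n:ℤ) < n := Int.emod_lt_of_pos x h0
    omega⟩

lemma tok_coe (x : ℤ) : ((tok n x : Fin n) : ℤ) = x % (n:ℤ) := by
  have h1 : 0 ≤ x % (n:ℤ) := Int.emod_nonneg x (by exact_mod_cast (NeZero.ne n))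
  simp [tok]
  omega

lemma tok_eq_iff {x y : ℤ} : tok n x = tok n y ↔ x % (n:ℤ) = y % (n:ℤ) := by
  constructor
  · intro h
    have := congrArg (fun t : Fin n => (t : ℤ)) h
    simpa [tok_coe] using this
  · intro h; unfold tok; simp [h]

lemma tok_fin (i : Fin n) : tok n (i : ℤ) = i := by
  apply Fin.ext
  have h := tok_coe (n := n) (i : ℤ)
  have h2 : ((i:ℤ)) % (n:ℤ) = (i:ℤ) :=
    Int.emod_eq_of_lt (by positivity) (by exact_mod_cast i.isLt)
  omega

lemma tok_add_mul (x : ℤ) (t : ℤ) : tok n (x + (n:ℤ) * t) = tok n x := by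
  rw [tok_eq_iff]
  simp [Int.add_mul_emod_self_left]

/-- an equivariant configuration on the line: `f` maps token-copies to positions. -/
structure Conf (n : ℕ) where
  f : ℤ ≃ ℤ
  hf : ∀ u : ℤ, f (u + n) = f u + n

namespace Conf

variable (c : Conf n)

lemma shift (u t : ℤ) : c.f (u + (n:ℤ) * t) = c.f u + (n:ℤ) * t := by
  induction t using Int.induction_on with
  | zero => simp
  | succ k ih =>
      have e1 : u + (n:ℤ) * ((k:ℤ)+1) = (u + (n:ℤ)*(k:ℤ)) + (n:ℤ) := by ring
      rw [e1, c.hf, ih]; ring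
  | pred k ih =>
      have e1 : u + (n:ℤ)*(-(k:ℤ)) = (u + (n:ℤ)*(-((k:ℤ)+1))) + (n:ℤ) := by ring
      have h2 := c.hf (u + (n:ℤ)*(-((k:ℤ)+1)))
      rw [← e1, ih] at h2
      ring_nf at h2 ⊢
      linarith

lemma symm_shift (x t : ℤ) : c.f.symm (x + (n:ℤ) * t) = c.f.symm x + (n:ℤ) * t := by
  apply c.f.injective
  rw [Equiv.apply_symm_apply, c.shift, Equiv.apply_symm_apply]

lemma emod_f {u v : ℤ} (h : u % (n:ℤ) = v % (n:ℤ)) :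
    c.f u % (n:ℤ) = c.f v % (n:ℤ) := by
  obtain ⟨t, ht⟩ := Int.ModEq.dvd (h : Int.ModEq (n:ℤ) u v)
  have hv : v = u + (n:ℤ) * t := by linarith
  rw [hv, c.shift]
  simp [Int.add_mul_emod_self_left]

lemma emod_symm {x y : ℤ} (h : x % (n:ℤ) = y % (n:ℤ)) :
    c.f.symm x % (n:ℤ) = c.f.symm y % (n:ℤ) := by
  obtain ⟨t, ht⟩ := Int.ModEq.dvd (h : Int.ModEq (n:ℤ) x y)
  have hv : y = x + (n:ℤ) * t := by linarith
  rw [hv, c.symm_shift]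
  simp [Int.add_mul_emod_self_left]

/-- projection: the permutation sending a position (in `Fin n`) to the token there. -/
def proj : Fin n ≃ Fin n where
  toFun p := tok n (c.f.symm (p : ℤ))
  invFun y := tok n (c.f (y : ℤ))
  left_inv p := by
    show tok n (c.f ((tok n (c.f.symm (p:ℤ)) : Fin n) : ℤ)) = p
    have h1 : ((tok n (c.f.symm (p:ℤ)) : Fin n) : ℤ) % (n:ℤ) = (c.f.symm (p:ℤ)) % (n:ℤ) := by
      rw [tok_coe]; exact Int.emod_emod_of_dvd _ dvd_rfl
    have h2 := c.emod_f h1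
    rw [Equiv.apply_symm_apply] at h2
    conv_rhs => rw [← tok_fin (n := n) p]
    rw [tok_eq_iff]; exact h2
  right_inv y := by
    show tok n (c.f.symm ((tok n (c.f (y:ℤ)) : Fin n) : ℤ)) = y
    have h1 : ((tok n (c.f (y:ℤ)) : Fin n) : ℤ) % (n:ℤ) = (c.f (y:ℤ)) % (n:ℤ) := by
      rw [tok_coe]; exact Int.emod_emod_of_dvd _ dvd_rfl
    have h2 := c.emod_symm h1
    rw [Equiv.symm_apply_apply] at h2
    conv_rhs => rw [← tok_fin (n := n) y]
    rw [tok_eq_iff]; exact h2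

lemma proj_apply (p : Fin n) : c.proj p = tok n (c.f.symm (p : ℤ)) := rfl

end Conf


lemma emod_succ_ne (h3 : 3 ≤ n) (p : ℤ) : p % (n:ℤ) ≠ (p+1) % (n:ℤ) := by
  intro h
  have hd : (n:ℤ) ∣ (p+1) - p := Int.ModEq.dvd (h : Int.ModEq (n:ℤ) p (p+1))
  simp at hd
  have := Int.le_of_dvd one_pos hd
  omega

/-- the position permutation swapping the residue classes of `p` and `p+1`. -/
def swapAtFun (n : ℕ) (p : ℤ) : ℤ → ℤ := fun x =>
  if x % (n:ℤ) = p % (n:ℤ) then x + 1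
  else if x % (n:ℤ) = (p+1) % (n:ℤ) then x - 1 else x

lemma emod_add_one {x p : ℤ} (h : x % (n:ℤ) = p % (n:ℤ)) :
    (x+1) % (n:ℤ) = (p+1) % (n:ℤ) := Int.ModEq.add_right 1 h

lemma emod_sub_one {x p : ℤ} (h : x % (n:ℤ) = (p+1) % (n:ℤ)) :
    (x-1) % (n:ℤ) = p % (n:ℤ) := by
  have := Int.ModEq.sub_right 1 (h : Int.ModEq (n:ℤ) x (p+1))
  simpa [Int.ModEq] using this

lemma swapAtFun_eq₁ {p x : ℤ} (h : x % (n:ℤ) = p % (n:ℤ)) :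
    swapAtFun n p x = x + 1 := by unfold swapAtFun; rw [if_pos h]

lemma swapAtFun_eq₂ (h3 : 3 ≤ n) {p x : ℤ} (h : x % (n:ℤ) = (p+1) % (n:ℤ)) :
    swapAtFun n p x = x - 1 := by
  unfold swapAtFun
  rw [if_neg (by rw [h]; exact fun e => emod_succ_ne h3 p e.symm), if_pos h]

lemma swapAtFun_eq₃ {p x : ℤ} (h1 : x % (n:ℤ) ≠ p % (n:ℤ))
    (h2 : x % (n:ℤ) ≠ (p+1) % (n:ℤ)) : swapAtFun n p x = x := by
  unfold swapAtFun; rw [if_neg h1, if_neg h2]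

lemma swapAtFun_involutive (h3 : 3 ≤ n) (p : ℤ) :
    Function.Involutive (swapAtFun n p) := by
  intro x
  by_cases h1 : x % (n:ℤ) = p % (n:ℤ)
  · rw [swapAtFun_eq₁ h1, swapAtFun_eq₂ h3 (emod_add_one h1)]; ring
  · by_cases h2 : x % (n:ℤ) = (p+1) % (n:ℤ)
    · rw [swapAtFun_eq₂ h3 h2, swapAtFun_eq₁ (emod_sub_one h2)]; ring
    · rw [swapAtFun_eq₃ h1 h2, swapAtFun_eq₃ h1 h2]

lemma swapAtFun_add_n (p x : ℤ) : swapAtFun n p (x + n) = swapAtFun n p x + n := by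
  unfold swapAtFun
  have e : (x + (n:ℤ)) % n = x % n := by simp [Int.add_mul_emod_self_left]
  rw [e]
  split_ifs <;> ring

/-- key order lemma: swapping at `p` changes the relative order only of pairs
occupying residues `(p, p+1)`. -/
lemma swapAtFun_lt_iff (h3 : 3 ≤ n) (p x y : ℤ)
    (hxy1 : ¬(x % (n:ℤ) = p % (n:ℤ) ∧ y % (n:ℤ) = (p+1) % (n:ℤ)))
    (hxy2 : ¬(x % (n:ℤ) = (p+1) % (n:ℤ) ∧ y % (n:ℤ) = p % (n:ℤ))) :
    (swapAtFun n p x < swapAtFun n p y ↔ x < y) := by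
  have hne : ∀ a b : ℤ, a % (n:ℤ) ≠ b % (n:ℤ) → a ≠ b := by
    intro a b h e; exact h (by rw [e])
  by_cases a1 : x % (n:ℤ) = p % (n:ℤ)
  · rw [swapAtFun_eq₁ a1]
    by_cases b1 : y % (n:ℤ) = p % (n:ℤ)
    · rw [swapAtFun_eq₁ b1]; omega
    · by_cases b2 : y % (n:ℤ) = (p+1) % (n:ℤ)
      · exact absurd ⟨a1, b2⟩ hxy1
      · rw [swapAtFun_eq₃ b1 b2]
        have k1 : x + 1 ≠ y := hne _ _ (by rw [emod_add_one a1]; exact fun e => b2 e.symm)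
        have k2 : x ≠ y := hne _ _ (by rw [a1]; exact fun e => b1 e.symm)
        omega
  · by_cases a2 : x % (n:ℤ) = (p+1) % (n:ℤ)
    · rw [swapAtFun_eq₂ h3 a2]
      by_cases b1 : y % (n:ℤ) = p % (n:ℤ)
      · exact absurd ⟨a2, b1⟩ hxy2
      · by_cases b2 : y % (n:ℤ) = (p+1) % (n:ℤ)
        · rw [swapAtFun_eq₂ h3 b2]; omega
        · rw [swapAtFun_eq₃ b1 b2]
          have k2 : x ≠ y := hne _ _ (by rw [a2]; exact fun e => b2 e.symm)
          omega
    · rw [swapAtFun_eq₃ a1 a2]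
      by_cases b1 : y % (n:ℤ) = p % (n:ℤ)
      · rw [swapAtFun_eq₁ b1]
        have k2 : x ≠ y := hne _ _ (by rw [b1]; exact a1)
        omega
      · by_cases b2 : y % (n:ℤ) = (p+1) % (n:ℤ)
        · rw [swapAtFun_eq₂ h3 b2]
          have k1 : x ≠ y - 1 := hne _ _ (by rw [emod_sub_one b2]; exact a1)
          omega
        · rw [swapAtFun_eq₃ b1 b2]


namespace Conf

/-- apply the swap at position residue `p` to a configuration. -/
def move (c : Conf n) (h3 : 3 ≤ n) (p : ℤ) : Conf n where
  f := c.f.trans (swapAtFun_involutive h3 p).toPerm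
  hf := by
    intro u
    show swapAtFun n p (c.f (u + n)) = swapAtFun n p (c.f u) + n
    rw [c.hf, swapAtFun_add_n]

lemma move_f (c : Conf n) (h3 : 3 ≤ n) (p u : ℤ) :
    (c.move h3 p).f u = swapAtFun n p (c.f u) := rfl

lemma move_symm (c : Conf n) (h3 : 3 ≤ n) (p x : ℤ) :
    (c.move h3 p).f.symm x = c.f.symm (swapAtFun n p x) := rfl

lemma proj_tok (c : Conf n) (x : ℤ) : c.proj (tok n x) = tok n (c.f.symm x) := by
  rw [proj_apply, tok_eq_iff]
  apply c.emod_symm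
  rw [tok_coe]
  exact Int.emod_emod_of_dvd _ dvd_rfl

lemma tok_symm_eq (c : Conf n) {x y : ℤ} (h : x % (n:ℤ) = y % (n:ℤ)) :
    tok n (c.f.symm x) = tok n (c.f.symm y) := tok_eq_iff.2 (c.emod_symm h)

end Conf

/-- two configurations have the same relative order on every pair of copies of
tokens that are not adjacent in `Y`. -/
def Match (Y : SimpleGraph (Fin n)) (c d : Conf n) : Prop :=
  ∀ u v : ℤ, ¬ Y.Adj (tok n u) (tok n v) → (c.f u < c.f v ↔ d.f u < d.f v)

lemma Match.refl (Y : SimpleGraph (Fin n)) (c : Conf n) : Match Y c c :=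
  fun _ _ _ => Iff.rfl

lemma Match.trans {Y : SimpleGraph (Fin n)} {c d e : Conf n}
    (h1 : Match Y c d) (h2 : Match Y d e) : Match Y c e :=
  fun u v h => (h1 u v h).trans (h2 u v h)

lemma Match.symm {Y : SimpleGraph (Fin n)} {c d : Conf n}
    (h : Match Y c d) : Match Y d c := fun u v hh => (h u v hh).symm

lemma match_move {Y : SimpleGraph (Fin n)} (c : Conf n) (h3 : 3 ≤ n) (p : ℤ)
    (hY : Y.Adj (tok n (c.f.symm p)) (tok n (c.f.symm (p+1)))) :
    Match Y c (c.move h3 p) := by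
  intro u v hA
  rw [c.move_f, c.move_f]
  rw [swapAtFun_lt_iff h3 p (c.f u) (c.f v) ?h1 ?h2]
  case h1 =>
    rintro ⟨e1, e2⟩
    apply hA
    have t1 : tok n u = tok n (c.f.symm p) := by
      have := c.emod_symm e1
      rw [Equiv.symm_apply_apply] at this
      exact tok_eq_iff.2 this
    have t2 : tok n v = tok n (c.f.symm (p+1)) := by
      have := c.emod_symm e2
      rw [Equiv.symm_apply_apply] at this
      exact tok_eq_iff.2 this
    rw [t1, t2]; exact hY
  case h2 =>
    rintro ⟨e1, e2⟩
    apply hA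
    have t1 : tok n u = tok n (c.f.symm (p+1)) := by
      have := c.emod_symm e1
      rw [Equiv.symm_apply_apply] at this
      exact tok_eq_iff.2 this
    have t2 : tok n v = tok n (c.f.symm p) := by
      have := c.emod_symm e2
      rw [Equiv.symm_apply_apply] at this
      exact tok_eq_iff.2 this
    rw [t1, t2]; exact hY.symm

lemma fin_one_val (h3 : 3 ≤ n) : ((1 : Fin n) : ℕ) = 1 := by
  rw [Fin.val_one']
  exact Nat.mod_eq_of_lt (by omega)

lemma tok_succ (h3 : 3 ≤ n) (p : ℤ) : tok n (p+1) = tok n p + 1 := by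
  apply Fin.ext
  rw [Fin.add_def, fin_one_val h3]
  show (tok n (p+1)).val = ((tok n p).val + 1) % n
  have h1 := tok_coe (n:=n) p
  have h2 := tok_coe (n:=n) (p+1)
  have hr0 : 0 ≤ p % (n:ℤ) := Int.emod_nonneg _ (by exact_mod_cast (NeZero.ne n))
  have hrn : p % (n:ℤ) < n := Int.emod_lt_of_pos _ (by positivity)
  have e : ((p % (n:ℤ)) + 1) % (n:ℤ) = (p+1) % (n:ℤ) :=
    Int.ModEq.add_right 1 (Int.emod_emod_of_dvd p dvd_rfl)
  by_cases hc : p % (n:ℤ) = (n:ℤ) - 1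
  · have e0 : (p+1) % (n:ℤ) = 0 := by rw [← e, hc]; simp
    have e1 : (tok n p).val + 1 = n := by omega
    rw [e1, Nat.mod_self]
    omega
  · have h5 : (p+1) % (n:ℤ) = p % (n:ℤ) + 1 := by
      rw [← e]; apply Int.emod_eq_of_lt <;> omega
    rw [Nat.mod_eq_of_lt (by omega)]
    omega

lemma cycle_adj_tok (h3 : 3 ≤ n) (p : ℤ) :
    (cycleGraph n).Adj (tok n p) (tok n (p+1)) := by
  rw [cycleGraph_adj']
  right
  rw [tok_succ h3, add_sub_cancel_left]
  exact fin_one_val h3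

lemma fin_ne_tok {r : Fin n} {x : ℤ} (h : r ≠ tok n x) :
    ((r:ℤ)) % (n:ℤ) ≠ x % (n:ℤ) := by
  intro e
  apply h
  rw [← tok_fin (n:=n) r, tok_eq_iff]
  exact e

lemma adj_move {Y : SimpleGraph (Fin n)} (h3 : 3 ≤ n) (c : Conf n) (p : ℤ)
    (hY : Y.Adj (tok n (c.f.symm p)) (tok n (c.f.symm (p+1)))) :
    (FS (cycleGraph n) Y).Adj c.proj ((c.move h3 p).proj) := by
  show fsAdj (cycleGraph n) Y _ _
  refine ⟨tok n p, tok n (p+1), cycle_adj_tok h3 p, ?_, ?_, ?_, ?_⟩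
  · rw [c.proj_tok, c.proj_tok]; exact hY
  · rw [c.proj_tok, (c.move h3 p).proj_tok, c.move_symm]
    rw [swapAtFun_eq₂ h3 rfl]
    have : p + 1 - 1 = p := by ring
    rw [this]
  · rw [c.proj_tok, (c.move h3 p).proj_tok, c.move_symm]
    rw [swapAtFun_eq₁ rfl]
  · intro r hra hrb
    rw [← tok_fin (n:=n) r, c.proj_tok, (c.move h3 p).proj_tok, c.move_symm]
    rw [swapAtFun_eq₃ (fin_ne_tok hra) (fin_ne_tok hrb)]

/-- the canonical lift of a permutation (positions → tokens) to the line. -/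
def liftConf (σ : Fin n ≃ Fin n) : Conf n where
  f := { toFun := fun u => ((σ.symm (tok n u) : Fin n) : ℤ) + u - ((tok n u : Fin n) : ℤ)
         invFun := fun x => ((σ (tok n x) : Fin n) : ℤ) + x - ((tok n x : Fin n) : ℤ)
         left_inv := by
           intro u
           have hy : ((tok n u : Fin n):ℤ) = u % n := tok_coe u
           have harr : ((σ.symm (tok n u) : Fin n) : ℤ) + u - ((tok n u : Fin n):ℤ)
               = ((σ.symm (tok n u) : Fin n) : ℤ) + (n:ℤ) * (u / n) := by
             rw [hy, Int.emod_def]; ring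
           simp only [harr, tok_add_mul, tok_fin]
           rw [Equiv.apply_symm_apply]
           rw [hy, Int.emod_def]; ring
         right_inv := by
           intro x
           have hy : ((tok n x : Fin n):ℤ) = x % n := tok_coe x
           have harr : ((σ (tok n x) : Fin n) : ℤ) + x - ((tok n x : Fin n):ℤ)
               = ((σ (tok n x) : Fin n) : ℤ) + (n:ℤ) * (x / n) := by
             rw [hy, Int.emod_def]; ring
           simp only [harr, tok_add_mul, tok_fin]
           rw [Equiv.symm_apply_apply]
           rw [hy, Int.emod_def]; ring }
  hf := by
    intro u
    have e1 : u + (n:ℤ) = u + (n:ℤ) * 1 := by ring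
    show ((σ.symm (tok n (u + (n:ℤ))) : Fin n) : ℤ) + (u + (n:ℤ)) - ((tok n (u + (n:ℤ)) : Fin n) : ℤ)
        = ((σ.symm (tok n u) : Fin n) : ℤ) + u - ((tok n u : Fin n) : ℤ) + (n:ℤ)
    rw [e1, tok_add_mul]
    ring

lemma liftConf_f (σ : Fin n ≃ Fin n) (u : ℤ) :
    (liftConf σ).f u = ((σ.symm (tok n u) : Fin n) : ℤ) + u - ((tok n u : Fin n) : ℤ) := rfl

lemma liftConf_proj (σ : Fin n ≃ Fin n) : (liftConf σ).proj = σ := by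
  apply Equiv.ext
  intro p
  conv_lhs => rw [← tok_fin (n:=n) p, (liftConf σ).proj_tok]
  show tok n (((σ (tok n (p:ℤ)) : Fin n) : ℤ) + (p:ℤ) - ((tok n (p:ℤ) : Fin n) : ℤ)) = σ p
  rw [tok_fin]
  have : ((σ p : Fin n) : ℤ) + (p:ℤ) - ((p : Fin n) : ℤ) = (σ p : ℤ) := by ring
  rw [this, tok_fin]

lemma liftConf_bound (σ : Fin n ≃ Fin n) (u : ℤ) :
    -(n:ℤ) < (liftConf σ).f u - u ∧ (liftConf σ).f u - u < n := by
  rw [liftConf_f]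
  have h1 := (σ.symm (tok n u)).isLt
  have h2 := (tok n u).isLt
  have h3 : (0:ℕ) ≤ (σ.symm (tok n u)).val := Nat.zero_le _
  constructor <;> [skip; skip] <;>
    · push_cast
      omega

/-- lifting a single FS-move. -/
lemma lift_step_core {Y : SimpleGraph (Fin n)} (h3 : 3 ≤ n) {σ τ : Fin n ≃ Fin n}
    (p : ℤ)
    (hY : Y.Adj (σ (tok n p)) (σ (tok n (p+1))))
    (h1 : σ (tok n p) = τ (tok n (p+1)))
    (h2 : σ (tok n (p+1)) = τ (tok n p))
    (hoth : ∀ r : Fin n, r ≠ tok n p → r ≠ tok n (p+1) → σ r = τ r)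
    (c : Conf n) (hc : c.proj = σ) :
    ∃ d : Conf n, d.proj = τ ∧ Match Y c d ∧ (FS (cycleGraph n) Y).Adj c.proj d.proj := by
  have key : ∀ x : ℤ, tok n (c.f.symm x) = σ (tok n x) := by
    intro x
    rw [← c.proj_tok x, hc]
  have hY' : Y.Adj (tok n (c.f.symm p)) (tok n (c.f.symm (p+1))) := by
    rw [key, key]; exact hY
  refine ⟨c.move h3 p, ?_, match_move c h3 p hY', adj_move h3 c p hY'⟩
  apply Equiv.ext
  intro r
  by_cases hra : r = tok n p
  · subst hra
    rw [(c.move h3 p).proj_tok, c.move_symm, swapAtFun_eq₁ rfl, key, ← h2]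
  · by_cases hrb : r = tok n (p+1)
    · subst hrb
      rw [(c.move h3 p).proj_tok, c.move_symm, swapAtFun_eq₂ h3 rfl]
      have e : p + 1 - 1 = p := by ring
      rw [e, key, ← h1]
    · rw [← tok_fin (n:=n) r, (c.move h3 p).proj_tok, c.move_symm,
        swapAtFun_eq₃ (fin_ne_tok hra) (fin_ne_tok hrb), key, tok_fin]
      exact hoth r hra hrb

lemma fin_eq_add_one_of_sub {a b : Fin n} (h3 : 3 ≤ n) (h : (b - a).val = 1) :
    b = a + 1 := by
  have hba : b - a = 1 := by
    apply Fin.ext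
    rw [h, fin_one_val h3]
  rw [sub_eq_iff_eq_add] at hba
  rw [hba, add_comm]

lemma lift_step {Y : SimpleGraph (Fin n)} (h3 : 3 ≤ n) {σ τ : Fin n ≃ Fin n}
    (hadj : (FS (cycleGraph n) Y).Adj σ τ)
    (c : Conf n) (hc : c.proj = σ) :
    ∃ d : Conf n, d.proj = τ ∧ Match Y c d := by
  obtain ⟨a, b, hX, hY, h1, h2, hoth⟩ := hadj
  rw [cycleGraph_adj'] at hX
  rcases hX with hX | hX
  · -- (a - b).val = 1, so a = b + 1 ; use p := (b : ℤ)
    have hab : a = b + 1 := fin_eq_add_one_of_sub h3 hX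
    have e1 : tok n ((b:ℤ)) = b := tok_fin b
    have e2 : tok n ((b:ℤ)+1) = a := by rw [tok_succ h3, e1, hab]
    obtain ⟨d, hd, hm, _⟩ := lift_step_core h3 (b:ℤ)
      (by rw [e1, e2]; exact hY.symm)
      (by rw [e1, e2]; exact h2)
      (by rw [e1, e2]; exact h1)
      (by intro r hr1 hr2; rw [e1] at hr1; rw [e2] at hr2; exact hoth r hr2 hr1)
      c hc
    exact ⟨d, hd, hm⟩
  · -- (b - a).val = 1, so b = a + 1 ; use p := (a : ℤ)
    have hab : b = a + 1 := fin_eq_add_one_of_sub h3 hX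
    have e1 : tok n ((a:ℤ)) = a := tok_fin a
    have e2 : tok n ((a:ℤ)+1) = b := by rw [tok_succ h3, e1, hab]
    obtain ⟨d, hd, hm, _⟩ := lift_step_core h3 (a:ℤ)
      (by rw [e1, e2]; exact hY)
      (by rw [e1, e2]; exact h1)
      (by rw [e1, e2]; exact h2)
      (by intro r hr1 hr2; rw [e1] at hr1; rw [e2] at hr2; exact hoth r hr1 hr2)
      c hc
    exact ⟨d, hd, hm⟩

lemma lift_walk {Y : SimpleGraph (Fin n)} (h3 : 3 ≤ n) :
    ∀ {σ τ : Fin n ≃ Fin n}, (FS (cycleGraph n) Y).Walk σ τ →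
    ∀ c : Conf n, c.proj = σ → ∃ d : Conf n, d.proj = τ ∧ Match Y c d := by
  intro σ τ w
  induction w with
  | nil => exact fun c hc => ⟨c, hc, Match.refl Y c⟩
  | cons h w ih =>
      intro c hc
      obtain ⟨d1, hd1, hm1⟩ := lift_step h3 h c hc
      obtain ⟨d, hd, hm⟩ := ih d1 hd1
      exact ⟨d, hd, hm1.trans hm⟩

section Recenter

variable {Y : SimpleGraph (Fin n)} (h3 : 3 ≤ n) (σ : Fin n ≃ Fin n) (c : Conf n)

/-- displacement of a token relative to the canonical lift of `σ`. -/
def Dfin (σ : Fin n ≃ Fin n) (c : Conf n) (y : Fin n) : ℤ :=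
  c.f (y:ℤ) - (liftConf σ).f (y:ℤ)

lemma disp_eq (u : ℤ) :
    c.f u - (liftConf σ).f u = Dfin σ c (tok n u) := by
  have hy : ((tok n u : Fin n):ℤ) = u % n := tok_coe u
  have hsplit : u = ((tok n u : Fin n):ℤ) + (n:ℤ) * (u / n) := by
    rw [hy, Int.emod_def]; ring
  unfold Dfin
  conv_lhs => rw [hsplit, c.shift, (liftConf σ).shift]
  ring

lemma adj_disp (hm : Match Y (liftConf σ) c) {y z : Fin n} (hadj : (Yᶜ).Adj y z) :
    -(n:ℤ) ≤ Dfin σ c y - Dfin σ c z ∧ Dfin σ c y - Dfin σ c z ≤ n := by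
  obtain ⟨hne, hYadj⟩ := (compl_adj Y y z).mp hadj
  set c₀ := liftConf σ with hc₀
  set a := c₀.f (y:ℤ) with ha
  set b := c₀.f (z:ℤ) with hb
  have hmodne : a % (n:ℤ) ≠ b % (n:ℤ) := by
    intro h
    have h2 := c₀.emod_symm h
    rw [Equiv.symm_apply_apply, Equiv.symm_apply_apply] at h2
    exact hne (by
      have := tok_eq_iff.mpr h2
      rwa [tok_fin, tok_fin] at this)
  have hid := Int.mul_ediv_add_emod (a - b) (n:ℤ)
  set q := (a - b) / (n:ℤ) with hq
  set r := (a - b) % (n:ℤ) with hr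
  have hr0 : 0 ≤ r := Int.emod_nonneg _ (by exact_mod_cast (NeZero.ne n))
  have hrn : r < n := Int.emod_lt_of_pos _ (by
    have := Nat.pos_of_ne_zero (NeZero.ne n); exact_mod_cast this)
  have hrne : r ≠ 0 := by
    intro h0
    apply hmodne
    have : a = b + (n:ℤ) * q := by omega
    rw [this, Int.add_mul_emod_self_left]
  set t := q + 1 with hT
  have he : (n:ℤ) * t = (n:ℤ) * q + n := by rw [hT]; ring
  have hb1 : a < b + (n:ℤ) * t := by omega
  have hb2 : b + (n:ℤ) * t < a + n := by omega
  have hna1 : ¬ Y.Adj (tok n (y:ℤ)) (tok n ((z:ℤ) + (n:ℤ) * t)) := by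
    rw [tok_add_mul, tok_fin, tok_fin]; exact hYadj
  have hna2 : ¬ Y.Adj (tok n ((z:ℤ) + (n:ℤ) * t)) (tok n ((y:ℤ) + (n:ℤ) * 1)) := by
    rw [tok_add_mul, tok_add_mul, tok_fin, tok_fin]
    exact fun h => hYadj h.symm
  have o1 : c.f (y:ℤ) < c.f ((z:ℤ) + (n:ℤ) * t) := by
    rw [← hm _ _ hna1]
    rw [(liftConf σ).shift]
    exact hb1
  have o2 : c.f ((z:ℤ) + (n:ℤ) * t) < c.f ((y:ℤ) + (n:ℤ) * 1) := by
    rw [← hm _ _ hna2]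
    rw [(liftConf σ).shift, (liftConf σ).shift]
    simpa using hb2
  rw [c.shift] at o1 o2
  rw [c.shift] at o2
  unfold Dfin
  rw [← ha, ← hb]
  constructor <;> omega

lemma walk_disp_bound (hm : Match Y (liftConf σ) c) :
    ∀ {y z : Fin n} (w : (Yᶜ).Walk y z),
      -((n:ℤ) * w.length) ≤ Dfin σ c y - Dfin σ c z ∧
        Dfin σ c y - Dfin σ c z ≤ (n:ℤ) * w.length := by
  intro y z w
  induction w with
  | nil => simp
  | @cons u v _ h w ih =>
      have h1 := adj_disp σ c hm h
      have h2 := ih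
      rw [SimpleGraph.Walk.length_cons]
      have e : (n:ℤ) * ((w.length : ℤ) + 1) = (n:ℤ) * w.length + n := by ring
      push_cast
      push_cast at h2
      constructor <;> omega

lemma reach_disp_bound (hm : Match Y (liftConf σ) c) {y z : Fin n}
    (h : (Yᶜ).Reachable y z) :
    -((n:ℤ) * n) ≤ Dfin σ c y - Dfin σ c z ∧
      Dfin σ c y - Dfin σ c z ≤ (n:ℤ) * n := by
  obtain ⟨w⟩ := h
  have hp : w.bypass.IsPath := SimpleGraph.Walk.bypass_isPath w
  have hl : w.bypass.length < n := by
    have := hp.length_lt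
    simpa using this
  have hb := walk_disp_bound σ c hm w.bypass
  have hcast : ((w.bypass.length : ℕ) : ℤ) ≤ (n:ℤ) := by exact_mod_cast hl.le
  have hnn : (0:ℤ) ≤ n := by positivity
  have h1 : (n:ℤ) * w.bypass.length ≤ (n:ℤ) * n := by
    apply mul_le_mul_of_nonneg_left hcast hnn
  constructor <;> omega

/-- the component representative of a token. -/
noncomputable def repTok (Y : SimpleGraph (Fin n)) (y : Fin n) : Fin n :=
  ((Yᶜ).connectedComponentMk y).out

lemma repTok_reach (y : Fin n) : (Yᶜ).Reachable y (repTok Y y) :=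
  SimpleGraph.ConnectedComponent.eq.mp ((Yᶜ).connectedComponentMk y).out_eq.symm

lemma repTok_eq_of_adj {y z : Fin n} (h : (Yᶜ).Adj y z) : repTok Y y = repTok Y z := by
  unfold repTok
  rw [SimpleGraph.ConnectedComponent.eq.mpr h.reachable]

/-- the recentering shift of a token. -/
noncomputable def shiftTok (Y : SimpleGraph (Fin n)) (σ : Fin n ≃ Fin n) (c : Conf n) (y : Fin n) : ℤ :=
  Dfin σ c (repTok Y y) / (n:ℤ)

/-- the recentered configuration. -/
noncomputable def recenterConf (Y : SimpleGraph (Fin n)) (σ : Fin n ≃ Fin n) (c : Conf n) : Conf n where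
  f := { toFun := fun u => c.f u - (n:ℤ) * shiftTok Y σ c (tok n u)
         invFun := fun x => c.f.symm (x + (n:ℤ) * shiftTok Y σ c (tok n (c.f.symm x)))
         left_inv := by
           intro u
           have e1 : tok n (c.f u - (n:ℤ) * shiftTok Y σ c (tok n u))
               = tok n (c.f u) := by
             have : c.f u - (n:ℤ) * shiftTok Y σ c (tok n u)
                 = c.f u + (n:ℤ) * (-(shiftTok Y σ c (tok n u))) := by ring
             rw [this, tok_add_mul]
           have e2 : tok n (c.f.symm (c.f u - (n:ℤ) * shiftTok Y σ c (tok n u)))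
               = tok n u := by
             rw [tok_eq_iff]
             have := c.emod_symm (tok_eq_iff.mp e1)
             rwa [Equiv.symm_apply_apply] at this
           show c.f.symm (c.f u - (n:ℤ) * shiftTok Y σ c (tok n u)
               + (n:ℤ) * shiftTok Y σ c
                  (tok n (c.f.symm (c.f u - (n:ℤ) * shiftTok Y σ c (tok n u))))) = u
           rw [e2]
           have e3 : c.f u - (n:ℤ) * shiftTok Y σ c (tok n u)
               + (n:ℤ) * shiftTok Y σ c (tok n u) = c.f u := by ring
           rw [e3, Equiv.symm_apply_apply]
         right_inv := by
           intro x
           show c.f (c.f.symm (x + (n:ℤ) * shiftTok Y σ c (tok n (c.f.symm x))))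
               - (n:ℤ) * shiftTok Y σ c
                  (tok n (c.f.symm (x + (n:ℤ) * shiftTok Y σ c (tok n (c.f.symm x))))) = x
           have e1 : tok n (c.f.symm (x + (n:ℤ) * shiftTok Y σ c (tok n (c.f.symm x))))
               = tok n (c.f.symm x) := by
             rw [tok_eq_iff]
             apply c.emod_symm
             simp [Int.add_mul_emod_self_left]
           rw [e1, Equiv.apply_symm_apply]
           ring }
  hf := by
    intro u
    show c.f (u + (n:ℤ)) - (n:ℤ) * shiftTok Y σ c (tok n (u + (n:ℤ)))
        = c.f u - (n:ℤ) * shiftTok Y σ c (tok n u) + n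
    have e : tok n (u + (n:ℤ)) = tok n u := by
      have : u + (n:ℤ) = u + (n:ℤ) * 1 := by ring
      rw [this, tok_add_mul]
    rw [e, c.hf]
    ring

lemma recenterConf_f (u : ℤ) :
    (recenterConf Y σ c).f u = c.f u - (n:ℤ) * shiftTok Y σ c (tok n u) := rfl

lemma recenterConf_proj : (recenterConf Y σ c).proj = c.proj := by
  apply Equiv.ext
  intro p
  rw [Conf.proj_apply, Conf.proj_apply]
  show tok n (c.f.symm ((p:ℤ) + (n:ℤ) * shiftTok Y σ c (tok n (c.f.symm (p:ℤ))))) = _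
  rw [tok_eq_iff]
  apply c.emod_symm
  simp [Int.add_mul_emod_self_left]

lemma shiftTok_eq_of_nonadj {y z : Fin n} (hne : y ≠ z) (hna : ¬ Y.Adj y z) :
    shiftTok Y σ c y = shiftTok Y σ c z := by
  unfold shiftTok
  rw [repTok_eq_of_adj ((compl_adj Y y z).mpr ⟨hne, hna⟩)]

lemma recenterConf_match (hm : Match Y (liftConf σ) c) :
    Match Y (liftConf σ) (recenterConf Y σ c) := by
  intro u v hna
  rw [hm u v hna]
  rw [recenterConf_f, recenterConf_f]
  by_cases htk : tok n u = tok n v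
  · rw [htk]
    constructor <;> intro h <;> omega
  · rw [shiftTok_eq_of_nonadj σ c htk hna]
    constructor <;> intro h <;> omega

lemma recenterConf_bound (hm : Match Y (liftConf σ) c) (u : ℤ) :
    -((n:ℤ)*n + n) ≤ (recenterConf Y σ c).f u - (liftConf σ).f u ∧
      (recenterConf Y σ c).f u - (liftConf σ).f u ≤ (n:ℤ)*n + n := by
  have key : (recenterConf Y σ c).f u - (liftConf σ).f u
      = Dfin σ c (tok n u) - (n:ℤ) * shiftTok Y σ c (tok n u) := by
    rw [recenterConf_f]
    have := disp_eq σ c u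
    omega
  set y := tok n u with hy
  have hreach := repTok_reach (Y := Y) y
  have hdb := reach_disp_bound σ c hm hreach
  have hdiv := Int.mul_ediv_add_emod (Dfin σ c (repTok Y y)) (n:ℤ)
  have hr0 : 0 ≤ (Dfin σ c (repTok Y y)) % (n:ℤ) :=
    Int.emod_nonneg _ (by exact_mod_cast (NeZero.ne n))
  have hrn : (Dfin σ c (repTok Y y)) % (n:ℤ) < n := Int.emod_lt_of_pos _ (by
    have := Nat.pos_of_ne_zero (NeZero.ne n); exact_mod_cast this)
  have hsh : (n:ℤ) * shiftTok Y σ c y = Dfin σ c (repTok Y y) - (Dfin σ c (repTok Y y)) % (n:ℤ) := by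
    unfold shiftTok
    omega
  rw [key, hsh]
  constructor <;> omega

end Recenter

section Sorting

variable {Y : SimpleGraph (Fin n)}

/-- the pair of token copies `u, v` is inverted between `e` and `g`. -/
def Invp (e g : Conf n) (u v : ℤ) : Prop :=
  (e.f u < e.f v ∧ g.f v < g.f u) ∨ (e.f v < e.f u ∧ g.f u < g.f v)

lemma Invp.comm {e g : Conf n} {u v : ℤ} (h : Invp e g u v) : Invp e g v u := by
  rcases h with ⟨h1, h2⟩ | ⟨h1, h2⟩
  · exact Or.inr ⟨h1, h2⟩
  · exact Or.inl ⟨h1, h2⟩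

lemma inv_shift {e g : Conf n} {u v : ℤ} (t : ℤ) (h : Invp e g u v) :
    Invp e g (u + (n:ℤ)*t) (v + (n:ℤ)*t) := by
  rcases h with ⟨h1, h2⟩ | ⟨h1, h2⟩
  · exact Or.inl ⟨by rw [e.shift, e.shift]; omega, by rw [g.shift, g.shift]; omega⟩
  · exact Or.inr ⟨by rw [e.shift, e.shift]; omega, by rw [g.shift, g.shift]; omega⟩

lemma inv_not_same_tok {e g : Conf n} {u v : ℤ} (htk : tok n u = tok n v) :
    ¬ Invp e g u v := by
  intro h
  have hmod := tok_eq_iff.mp htk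
  obtain ⟨t, ht⟩ := Int.ModEq.dvd (hmod : Int.ModEq (n:ℤ) u v)
  have hv : v = u + (n:ℤ) * t := by linarith
  subst hv
  have he := e.shift u t
  have hg := g.shift u t
  rcases h with ⟨h1, h2⟩ | ⟨h1, h2⟩ <;> linarith

lemma inv_of_match_disagree {e g : Conf n} (hM : Match Y e g) {u v : ℤ}
    (h : Invp e g u v) : Y.Adj (tok n u) (tok n v) := by
  by_contra hna
  have := hM u v hna
  have hne : e.f u ≠ e.f v := by
    intro heq
    rcases h with ⟨h1, _⟩ | ⟨h1, _⟩ <;> omega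
  rcases h with ⟨h1, h2⟩ | ⟨h1, h2⟩
  · have := this.mp h1; omega
  · have h4 : ¬ (e.f u < e.f v) := by omega
    have := this.mpr h2
    omega

/-- the window size. -/
def Mwin (n : ℕ) : ℤ := 2*(n:ℤ)*(n:ℤ) + 4*(n:ℤ)

lemma inv_window {σ : Fin n ≃ Fin n} {g : Conf n}
    (hbg : ∀ u : ℤ, -((n:ℤ)*n + n) ≤ g.f u - (liftConf σ).f u ∧
      g.f u - (liftConf σ).f u ≤ (n:ℤ)*n + n)
    {u v : ℤ} (h : Invp (liftConf σ) g u v) :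
    -(Mwin n) ≤ v - u ∧ v - u ≤ Mwin n := by
  have b1 := hbg u
  have b2 := hbg v
  have l1 := liftConf_bound σ u
  have l2 := liftConf_bound σ v
  unfold Mwin
  rcases h with ⟨h1, h2⟩ | ⟨h1, h2⟩ <;> constructor <;> nlinarith

open Classical in
noncomputable def InvFinset (e g : Conf n) : Finset (ℕ × ℤ) :=
  ((Finset.range n) ×ˢ (Finset.Icc (-(Mwin n)) (Mwin n))).filter
    fun q => Invp e g (q.1 : ℤ) ((q.1 : ℤ) + q.2)

lemma mem_InvFinset {e g : Conf n} {q : ℕ × ℤ} :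
    q ∈ InvFinset e g ↔
      q.1 < n ∧ q.2 ∈ Finset.Icc (-(Mwin n)) (Mwin n) ∧ Invp e g (q.1 : ℤ) ((q.1 : ℤ) + q.2) := by
  unfold InvFinset
  simp [Finset.mem_filter, Finset.mem_product]
  tauto

/-- normalize an inverted pair into the window. -/
lemma inv_normalize {e g : Conf n} {u v : ℤ} (h : Invp e g u v) :
    Invp e g (u % (n:ℤ)) (v - (n:ℤ) * (u / (n:ℤ))) ∧
      0 ≤ u % (n:ℤ) ∧ u % (n:ℤ) < n := by
  have h2 := inv_shift (-(u / (n:ℤ))) h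
  have e1 : u + (n:ℤ) * -(u / (n:ℤ)) = u % (n:ℤ) := by
    rw [Int.emod_def]; ring
  have e2 : v + (n:ℤ) * -(u / (n:ℤ)) = v - (n:ℤ) * (u / (n:ℤ)) := by ring
  rw [e1, e2] at h2
  refine ⟨h2, Int.emod_nonneg _ (by exact_mod_cast (NeZero.ne n)), ?_⟩
  exact Int.emod_lt_of_pos _ (by exact_mod_cast Nat.pos_of_ne_zero (NeZero.ne n))

lemma inv_mem_InvFinset {σ : Fin n ≃ Fin n} {e g : Conf n}
    (hbg : ∀ u : ℤ, -((n:ℤ)*n + n) ≤ g.f u - (liftConf σ).f u ∧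
      g.f u - (liftConf σ).f u ≤ (n:ℤ)*n + n)
    (hsub : ∀ u v : ℤ, Invp e g u v → Invp (liftConf σ) g u v)
    {u v : ℤ} (h : Invp e g u v) (hu0 : 0 ≤ u) (hun : u < n) :
    (u.toNat, v - u) ∈ InvFinset e g := by
  rw [mem_InvFinset]
  have hw := inv_window hbg (hsub u v h)
  have hcast : ((u.toNat : ℕ) : ℤ) = u := Int.toNat_of_nonneg hu0
  refine ⟨by omega, ?_, ?_⟩
  · rw [Finset.mem_Icc]; omega
  · show Invp e g ((u.toNat : ℕ) : ℤ) (((u.toNat : ℕ) : ℤ) + (v - u))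
    rw [hcast]
    have : u + (v - u) = v := by ring
    rw [this]
    exact h

lemma InvFinset_card_le (e g : Conf n) (h3 : 3 ≤ n) :
    (InvFinset e g).card ≤ n * (4*n^2 + 8*n + 1) := by
  calc (InvFinset e g).card
      ≤ ((Finset.range n) ×ˢ (Finset.Icc (-(Mwin n)) (Mwin n))).card := by
        apply Finset.card_le_card
        intro q hq
        rw [mem_InvFinset] at hq
        rw [Finset.mem_product, Finset.mem_range]
        exact ⟨hq.1, hq.2.1⟩
    _ = n * (Finset.Icc (-(Mwin n)) (Mwin n)).card := by
        rw [Finset.card_product, Finset.card_range]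
    _ ≤ n * (4*n^2 + 8*n + 1) := by
        apply Nat.mul_le_mul_left
        rw [Int.card_Icc]
        have : Mwin n + 1 - (-(Mwin n)) = ((4*n^2 + 8*n + 1 : ℕ) : ℤ) := by
          unfold Mwin; push_cast; ring
        rw [this, Int.toNat_natCast]

lemma exists_adj_inv {Y : SimpleGraph (Fin n)} {e g : Conf n} (hM : Match Y e g)
    {u₀ v₀ : ℤ} (h0 : Invp e g u₀ v₀) :
    ∃ u v : ℤ, Invp e g u v ∧ e.f v = e.f u + 1 ∧ Y.Adj (tok n u) (tok n v) := by
  classical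
  set P : ℕ → Prop := fun d => ∃ u v : ℤ, Invp e g u v ∧ e.f v = e.f u + (d:ℤ) ∧ 0 < d with hPdef
  have hP : ∃ d : ℕ, P d := by
    rcases h0 with ⟨h1, h2⟩ | ⟨h1, h2⟩
    · exact ⟨(e.f v₀ - e.f u₀).toNat, u₀, v₀, Or.inl ⟨h1, h2⟩, by omega, by omega⟩
    · exact ⟨(e.f u₀ - e.f v₀).toNat, v₀, u₀, Or.inl ⟨h1, h2⟩, by omega, by omega⟩
  obtain ⟨u, v, hi, hd, hdpos⟩ := Nat.find_spec hP
  have hd1 : Nat.find hP = 1 := by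
    by_contra hne1
    have hge2 : 2 ≤ Nat.find hP := by
      have := Nat.find_spec hP
      rcases Nat.lt_or_ge (Nat.find hP) 2 with h | h
      · interval_cases h' : Nat.find hP <;> omega
      · exact h
    set w := e.f.symm (e.f u + 1) with hwdef
    have hw : e.f w = e.f u + 1 := by rw [hwdef, Equiv.apply_symm_apply]
    have hg : g.f v < g.f u := by
      rcases hi with ⟨h1, h2⟩ | ⟨h1, h2⟩
      · exact h2
      · omega
    rcases lt_trichotomy (g.f w) (g.f u) with hc | hc | hc
    · have hP1 : P 1 := ⟨u, w, Or.inl ⟨by omega, hc⟩, by push_cast; omega, by omega⟩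
      have := Nat.find_min' hP hP1
      omega
    · have : w = u := g.f.injective hc
      rw [this] at hw
      omega
    · have hP1 : P (Nat.find hP - 1) :=
        ⟨w, v, Or.inl ⟨by omega, by omega⟩, by push_cast; omega, by omega⟩
      have := Nat.find_min' hP hP1
      omega
  rw [hd1] at hd
  push_cast at hd
  exact ⟨u, v, hi, hd, inv_of_match_disagree hM hi⟩

lemma invp_move_pres (h3 : 3 ≤ n) {e g : Conf n} (p : ℤ) {x y : ℤ}
    (hxy1 : ¬(e.f x % (n:ℤ) = p % (n:ℤ) ∧ e.f y % (n:ℤ) = (p+1) % (n:ℤ)))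
    (hxy2 : ¬(e.f x % (n:ℤ) = (p+1) % (n:ℤ) ∧ e.f y % (n:ℤ) = p % (n:ℤ))) :
    Invp (e.move h3 p) g x y ↔ Invp e g x y := by
  have i1 := swapAtFun_lt_iff h3 p (e.f x) (e.f y) hxy1 hxy2
  have i2 := swapAtFun_lt_iff h3 p (e.f y) (e.f x)
    (fun h => hxy2 ⟨h.2, h.1⟩) (fun h => hxy1 ⟨h.2, h.1⟩)
  unfold Invp
  rw [e.move_f, e.move_f, i1, i2]

lemma invp_move_core (h3 : 3 ≤ n) {e g : Conf n} {u v : ℤ}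
    (hor : e.f v = e.f u + 1) (hg : g.f v < g.f u) {x y : ℤ}
    (hcx : e.f x % (n:ℤ) = (e.f u) % (n:ℤ))
    (hcy : e.f y % (n:ℤ) = (e.f u + 1) % (n:ℤ))
    (h' : Invp (e.move h3 (e.f u)) g x y) : Invp e g x y := by
  have hnpos : (0:ℤ) < n := by positivity
  -- x = u + n s
  have hxu : x % (n:ℤ) = u % (n:ℤ) := by
    have := e.emod_symm hcx
    rwa [Equiv.symm_apply_apply, Equiv.symm_apply_apply] at this
  have hyv : y % (n:ℤ) = v % (n:ℤ) := by
    have h2 : e.f y % (n:ℤ) = e.f v % (n:ℤ) := by rw [hor]; exact hcy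
    have := e.emod_symm h2
    rwa [Equiv.symm_apply_apply, Equiv.symm_apply_apply] at this
  obtain ⟨s, hs⟩ := Int.ModEq.dvd (hxu.symm : Int.ModEq (n:ℤ) u x)
  obtain ⟨t, ht⟩ := Int.ModEq.dvd (hyv.symm : Int.ModEq (n:ℤ) v y)
  have hx : x = u + (n:ℤ)*s := by linarith
  have hy : y = v + (n:ℤ)*t := by linarith
  subst hx hy
  have hex : e.f (u + (n:ℤ)*s) = e.f u + (n:ℤ)*s := e.shift u s
  have hey : e.f (v + (n:ℤ)*t) = e.f u + 1 + (n:ℤ)*t := by rw [e.shift, hor]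
  have hgx : g.f (u + (n:ℤ)*s) = g.f u + (n:ℤ)*s := g.shift u s
  have hgy : g.f (v + (n:ℤ)*t) = g.f v + (n:ℤ)*t := g.shift v t
  have hex' : (e.move h3 (e.f u)).f (u + (n:ℤ)*s) = e.f u + (n:ℤ)*s + 1 := by
    rw [e.move_f, hex]
    rw [swapAtFun_eq₁ (by simp [Int.add_mul_emod_self_left])]
  have hey' : (e.move h3 (e.f u)).f (v + (n:ℤ)*t) = e.f u + (n:ℤ)*t := by
    rw [e.move_f, hey]
    have harr : e.f u + 1 + (n:ℤ)*t = (e.f u + 1) + (n:ℤ)*t := by ring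
    rw [swapAtFun_eq₂ h3 (by rw [harr]; simp [Int.add_mul_emod_self_left])]
    ring
  rcases h' with ⟨h1, h2⟩ | ⟨h1, h2⟩
  · rw [hex', hey'] at h1
    left
    exact ⟨by rw [hex, hey]; omega, h2⟩
  · exfalso
    rw [hex', hey'] at h1
    rw [hgx, hgy] at h2
    have hst : (n:ℤ)*s < (n:ℤ)*t := by omega
    have h5 : s < t := lt_of_mul_lt_mul_left hst (by positivity)
    have h6 : (n:ℤ)*(s+1) ≤ (n:ℤ)*t := by
      apply mul_le_mul_of_nonneg_left (by omega) (by positivity)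
    have h7 : (n:ℤ)*(s+1) = (n:ℤ)*s + n := by ring
    omega

lemma invp_move_subset (h3 : 3 ≤ n) {e g : Conf n} {u v : ℤ}
    (hor : e.f v = e.f u + 1) (hInv : Invp e g u v) :
    ∀ x y : ℤ, Invp (e.move h3 (e.f u)) g x y → Invp e g x y := by
  have hg : g.f v < g.f u := by
    rcases hInv with ⟨h1, h2⟩ | ⟨h1, h2⟩
    · exact h2
    · omega
  intro x y h'
  by_cases hA : e.f x % (n:ℤ) = (e.f u) % (n:ℤ) ∧ e.f y % (n:ℤ) = (e.f u + 1) % (n:ℤ)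
  · exact invp_move_core h3 hor hg hA.1 hA.2 h'
  · by_cases hB : e.f x % (n:ℤ) = (e.f u + 1) % (n:ℤ) ∧ e.f y % (n:ℤ) = (e.f u) % (n:ℤ)
    · exact (invp_move_core h3 hor hg hB.2 hB.1 h'.comm).comm
    · exact (invp_move_pres h3 (e.f u) hA hB).mp h'

lemma no_inv_of_card_zero {σ : Fin n ≃ Fin n} {e g : Conf n}
    (hbg : ∀ u : ℤ, -((n:ℤ)*n + n) ≤ g.f u - (liftConf σ).f u ∧
      g.f u - (liftConf σ).f u ≤ (n:ℤ)*n + n)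
    (hsub : ∀ u v : ℤ, Invp e g u v → Invp (liftConf σ) g u v)
    (hcard : (InvFinset e g).card = 0) : ∀ u v : ℤ, ¬ Invp e g u v := by
  intro u v hInv
  obtain ⟨h2, hu0, hun⟩ := inv_normalize hInv
  have hmem := inv_mem_InvFinset hbg hsub h2 hu0 hun
  rw [Finset.card_eq_zero] at hcard
  rw [hcard] at hmem
  exact absurd hmem (Finset.notMem_empty _)

lemma sort_base {e g : Conf n} (hnoinv : ∀ u v : ℤ, ¬ Invp e g u v) :
    ∃ c : ℤ, ∀ u : ℤ, e.f u = g.f u + c := by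
  set E : ℤ ≃ ℤ := g.f.symm.trans e.f with hE
  have hEdef : ∀ x : ℤ, E x = e.f (g.f.symm x) := fun x => rfl
  have hmono : StrictMono (fun x : ℤ => E x) := by
    intro x y hxy
    simp only [hEdef]
    have hgu : g.f (g.f.symm x) = x := g.f.apply_symm_apply x
    have hgv : g.f (g.f.symm y) = y := g.f.apply_symm_apply y
    rcases lt_trichotomy (e.f (g.f.symm x)) (e.f (g.f.symm y)) with h | h | h
    · exact h
    · exfalso
      have : g.f.symm x = g.f.symm y := e.f.injective h
      rw [← hgu, ← hgv, this] at hxy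
      omega
    · exact absurd (Or.inr ⟨h, by rw [hgu, hgv]; exact hxy⟩)
        (hnoinv (g.f.symm x) (g.f.symm y))
  have hstep : ∀ x : ℤ, E (x+1) = E x + 1 := by
    intro x
    have h1 : E x < E (x+1) := hmono (by omega)
    have hEw : E (E.symm (E x + 1)) = E x + 1 := E.apply_symm_apply _
    have hxw : x < E.symm (E x + 1) := by
      apply hmono.lt_iff_lt.mp
      show E x < E (E.symm (E x + 1))
      rw [hEw]
      omega
    have h2 : E (x+1) ≤ E (E.symm (E x + 1)) := by
      apply hmono.le_iff_le.mpr
      omega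
    rw [hEw] at h2
    omega
  have hlin : ∀ x : ℤ, E x = x + E 0 := by
    intro x
    induction x using Int.induction_on with
    | zero => omega
    | succ k ih =>
        have := hstep k
        push_cast
        push_cast at ih
        omega
    | pred k ih =>
        have h4 := hstep (-(k:ℤ)-1)
        have e1 : (-(k:ℤ)-1+1) = -(k:ℤ) := by ring
        rw [e1] at h4
        have e2 : -((k:ℤ)+1) = -(k:ℤ)-1 := by ring
        push_cast
        push_cast at ih h4
        omega
  refine ⟨E 0, fun u => ?_⟩
  have h2 : E (g.f u) = e.f u := by rw [hEdef, Equiv.symm_apply_apply]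
  rw [← h2, hlin (g.f u)]

lemma sort_rec {Y : SimpleGraph (Fin n)} (h3 : 3 ≤ n) (σ : Fin n ≃ Fin n) (g : Conf n)
    (hbg : ∀ u : ℤ, -((n:ℤ)*n + n) ≤ g.f u - (liftConf σ).f u ∧
      g.f u - (liftConf σ).f u ≤ (n:ℤ)*n + n) :
    ∀ (N : ℕ) (e : Conf n), Match Y e g →
      (∀ u v : ℤ, Invp e g u v → Invp (liftConf σ) g u v) →
      (InvFinset e g).card ≤ N →
      ∃ (d : Conf n) (w : (FS (cycleGraph n) Y).Walk e.proj d.proj),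
        w.length ≤ N ∧ ∃ c : ℤ, ∀ u : ℤ, d.f u = g.f u + c := by
  intro N
  induction N with
  | zero =>
      intro e hM hsub hcard
      obtain ⟨c, hc⟩ := sort_base (no_inv_of_card_zero hbg hsub (by omega))
      exact ⟨e, SimpleGraph.Walk.nil, by simp, c, hc⟩
  | succ N ih =>
      intro e hM hsub hcard
      by_cases hc0 : (InvFinset e g).card = 0
      · obtain ⟨c, hc⟩ := sort_base (no_inv_of_card_zero hbg hsub hc0)
        exact ⟨e, SimpleGraph.Walk.nil, by simp, c, hc⟩
      · -- find an inverted pair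
        obtain ⟨q, hq⟩ := Finset.card_pos.mp (Nat.pos_of_ne_zero hc0)
        rw [mem_InvFinset] at hq
        obtain ⟨u, v, hi, hd, hYadj⟩ := exists_adj_inv hM hq.2.2
        set e' := e.move h3 (e.f u) with he'
        have hY' : Y.Adj (tok n (e.f.symm (e.f u))) (tok n (e.f.symm (e.f u + 1))) := by
          rw [Equiv.symm_apply_apply, ← hd, Equiv.symm_apply_apply]
          exact hYadj
        have hadj : (FS (cycleGraph n) Y).Adj e.proj e'.proj := adj_move h3 e (e.f u) hY'
        have hM' : Match Y e' g := ((match_move e h3 (e.f u) hY').symm).trans hM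
        have hmove_sub := invp_move_subset h3 hd hi
        have hsub' : ∀ x y : ℤ, Invp e' g x y → Invp (liftConf σ) g x y :=
          fun x y h => hsub x y (hmove_sub x y h)
        -- strict decrease of the inversion set
        have hg : g.f v < g.f u := by
          rcases hi with ⟨h1, h2⟩ | ⟨h1, h2⟩
          · exact h2
          · omega
        obtain ⟨hnorm, hu0, hun⟩ := inv_normalize hi
        have hmem : ((u % (n:ℤ)).toNat, (v - (n:ℤ)*(u/(n:ℤ))) - u % (n:ℤ)) ∈ InvFinset e g :=
          inv_mem_InvFinset hbg hsub hnorm hu0 hun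
        have hnotmem : ((u % (n:ℤ)).toNat, (v - (n:ℤ)*(u/(n:ℤ))) - u % (n:ℤ)) ∉ InvFinset e' g := by
          rw [mem_InvFinset]
          rintro ⟨-, -, hbad⟩
          have hcast : (((u % (n:ℤ)).toNat : ℕ) : ℤ) = u % (n:ℤ) := Int.toNat_of_nonneg hu0
          rw [hcast] at hbad
          have harr : u % (n:ℤ) + ((v - (n:ℤ)*(u/(n:ℤ))) - u % (n:ℤ)) = v - (n:ℤ)*(u/(n:ℤ)) := by
            ring
          rw [harr] at hbad
          -- compute values of e' at the normalized pair
          have hu' : u % (n:ℤ) = u + (n:ℤ) * (-(u/(n:ℤ))) := by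
            rw [Int.emod_def]; ring
          have hv' : v - (n:ℤ)*(u/(n:ℤ)) = v + (n:ℤ) * (-(u/(n:ℤ))) := by ring
          have heu : e.f (u % (n:ℤ)) = e.f u + (n:ℤ) * (-(u/(n:ℤ))) := by
            rw [hu', e.shift]
          have hev : e.f (v - (n:ℤ)*(u/(n:ℤ))) = e.f u + 1 + (n:ℤ) * (-(u/(n:ℤ))) := by
            rw [hv', e.shift, hd]
          have hgu : g.f (u % (n:ℤ)) = g.f u + (n:ℤ) * (-(u/(n:ℤ))) := by
            rw [hu', g.shift]
          have hgv : g.f (v - (n:ℤ)*(u/(n:ℤ))) = g.f v + (n:ℤ) * (-(u/(n:ℤ))) := by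
            rw [hv', g.shift]
          have heu' : e'.f (u % (n:ℤ)) = e.f u + (n:ℤ) * (-(u/(n:ℤ))) + 1 := by
            rw [he', e.move_f, heu]
            rw [swapAtFun_eq₁ (by simp [Int.add_mul_emod_self_left])]
          have hev' : e'.f (v - (n:ℤ)*(u/(n:ℤ))) = e.f u + (n:ℤ) * (-(u/(n:ℤ))) := by
            rw [he', e.move_f, hev]
            have harr2 : e.f u + 1 + (n:ℤ) * (-(u/(n:ℤ))) = (e.f u + 1) + (n:ℤ) * (-(u/(n:ℤ))) := by
              ring
            rw [swapAtFun_eq₂ h3 (by rw [harr2]; simp [Int.add_mul_emod_self_left])]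
            ring
          rcases hbad with ⟨h1, h2⟩ | ⟨h1, h2⟩
          · rw [heu', hev'] at h1
            omega
          · rw [hgu, hgv] at h2
            omega
        have hss : InvFinset e' g ⊂ InvFinset e g := by
          rw [Finset.ssubset_iff_of_subset ?hsub2]
          case hsub2 =>
            intro q' hq'
            rw [mem_InvFinset] at hq' ⊢
            exact ⟨hq'.1, hq'.2.1, hmove_sub _ _ hq'.2.2⟩
          exact ⟨_, hmem, hnotmem⟩
        have hcard' : (InvFinset e' g).card ≤ N := by
          have := Finset.card_lt_card hss
          omega
        obtain ⟨d, w', hw', c, hc⟩ := ih e' hM' hsub' hcard'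
        refine ⟨d, SimpleGraph.Walk.cons hadj w', ?_, c, hc⟩
        rw [SimpleGraph.Walk.length_cons]
        omega

end Sorting

end Core

theorem fs_cycle_rotation_close_aux :
    ∀ (n : ℕ) (hn : 3 ≤ n) (Y : SimpleGraph (Fin n))
      (σ τ : Fin n ≃ Fin n),
      (FS (cycleGraph n) Y).Reachable σ τ →
      ∃ k : ℕ, k ≤ n - 1 ∧ ∃ τs : Fin n ≃ Fin n,
        (∀ i : Fin n, τs i = τ ⟨(i.val + k) % n, Nat.mod_lt _ (by omega : n > 0)⟩) ∧
        (FS (cycleGraph n) Y).Reachable σ τs ∧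
        (FS (cycleGraph n) Y).dist σ τs ≤ 7 * n ^ 3 := by
  intro n hn Y σ τ hreach
  haveI : NeZero n := ⟨by omega⟩
  have h3 : 3 ≤ n := hn
  have hnpos : (0:ℤ) < (n:ℤ) := by exact_mod_cast (by omega : 0 < n)
  obtain ⟨wlk⟩ := hreach
  obtain ⟨d0, hd0proj, hmatch⟩ := lift_walk h3 wlk (liftConf σ) (liftConf_proj σ)
  set g := recenterConf Y σ d0 with hgdef
  have hgproj : g.proj = τ := by rw [hgdef, recenterConf_proj, hd0proj]
  have hgmatch : Match Y (liftConf σ) g := recenterConf_match σ d0 hmatch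
  have hbg : ∀ u : ℤ, -((n:ℤ)*n + n) ≤ g.f u - (liftConf σ).f u ∧
      g.f u - (liftConf σ).f u ≤ (n:ℤ)*n + n := fun u => recenterConf_bound σ d0 hmatch u
  obtain ⟨dfin, w, hlen, c, hc⟩ :=
    sort_rec h3 σ g hbg ((InvFinset (liftConf σ) g).card) (liftConf σ)
      hgmatch (fun u v h => h) (le_refl _)
  set k := ((-c) % (n:ℤ)).toNat with hk
  have hk0 : 0 ≤ (-c) % (n:ℤ) := Int.emod_nonneg _ (by omega)
  have hkn : (-c) % (n:ℤ) < n := Int.emod_lt_of_pos _ hnpos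
  have hkcast : ((k:ℕ):ℤ) = (-c) % (n:ℤ) := Int.toNat_of_nonneg hk0
  refine ⟨k, by omega, dfin.proj, ?_, ?_, ?_⟩
  · -- the rotation formula
    intro i
    have hsymm : ∀ p : ℤ, dfin.f.symm p = g.f.symm (p - c) := by
      intro p
      have h1 : dfin.f (g.f.symm (p - c)) = p := by
        rw [hc, Equiv.apply_symm_apply]; ring
      exact (Equiv.symm_apply_eq _).mpr h1.symm
    have e1 : dfin.proj i = tok n (g.f.symm ((i:ℤ) - c)) := by
      rw [Conf.proj_apply, hsymm]
    have e2 : tok n (g.f.symm ((i:ℤ) - c)) = g.proj (tok n ((i:ℤ) - c)) :=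
      (g.proj_tok _).symm
    have e3 : tok n ((i:ℤ) - c) = (⟨(i.val + k) % n, Nat.mod_lt _ (by omega)⟩ : Fin n) := by
      apply Fin.ext
      show ((((i:ℤ) - c) % (n:ℤ)).toNat) = (i.val + k) % n
      have hint : ((i:ℤ) - c) % (n:ℤ) = (((i.val + k) % n : ℕ) : ℤ) := by
        push_cast
        have hmod : ((i:ℤ) + ((-c) % (n:ℤ))) % (n:ℤ) = ((i:ℤ) + (-c)) % (n:ℤ) :=
          Int.ModEq.add_left _ (Int.emod_emod_of_dvd _ dvd_rfl)
        rw [hkcast, hmod]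
        ring_nf
      rw [hint, Int.toNat_natCast]
    rw [e1, e2, e3, hgproj]
  · -- reachability
    have hreach2 : (FS (cycleGraph n) Y).Reachable ((liftConf σ).proj) dfin.proj := ⟨w⟩
    rwa [liftConf_proj] at hreach2
  · -- distance bound
    have hdist : (FS (cycleGraph n) Y).dist ((liftConf σ).proj) dfin.proj ≤ w.length :=
      SimpleGraph.dist_le w
    have hcard := InvFinset_card_le (liftConf σ) g h3
    have hnum : n * (4*n^2 + 8*n + 1) ≤ 7 * n^3 := by nlinarith
    calc (FS (cycleGraph n) Y).dist σ dfin.proj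
        = (FS (cycleGraph n) Y).dist ((liftConf σ).proj) dfin.proj := by
          rw [liftConf_proj]
      _ ≤ w.length := hdist
      _ ≤ (InvFinset (liftConf σ) g).card := hlen
      _ ≤ n * (4*n^2 + 8*n + 1) := hcard
      _ ≤ 7 * n^3 := hnum


/-- There is an absolute constant `C > 0` such that for every `n ≥ 3`, every
`n`-vertex graph `Y`, and every pair of bijections `σ`, `τ` in the same connected component of
`FS(Cycle_n, Y)`, some cyclic rotation `τs` of `τ` (given by `τs i = τ ((i + k) mod n)` for
some `0 ≤ k ≤ n - 1`) lies in the same connected component as `σ` and satisfies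
`d(σ, τs) ≤ C * n³`. -/
theorem fs_cycle_rotation_close :
    ∃ C : ℕ, 0 < C ∧ ∀ (n : ℕ) (hn : 3 ≤ n) (Y : SimpleGraph (Fin n))
      (σ τ : Fin n ≃ Fin n),
      (FS (cycleGraph n) Y).Reachable σ τ →
      ∃ k : ℕ, k ≤ n - 1 ∧ ∃ τs : Fin n ≃ Fin n,
        (∀ i : Fin n, τs i = τ ⟨(i.val + k) % n, Nat.mod_lt _ (by omega)⟩) ∧
        (FS (cycleGraph n) Y).Reachable σ τs ∧
        (FS (cycleGraph n) Y).dist σ τs ≤ C * n ^ 3 := by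
  exact ⟨7, by omega, fs_cycle_rotation_close_aux⟩
end
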